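/- arXiv:math/0409155 — 5 statements merged into one kernel-verified Lean document; each statement's English description precedes it below -/
import Mathlib

section
/- Let V be a Banach space, let S be a proper family of bounded linear operators on V and let A = DS be its derivative at 0 (the generator of the associated strongly continuous semigroup (e^{tA})). Let (t_i^n)_{1 ≤ i ≤ r_n}, n ∈ ℕ, be positive real numbers such that Σ_{i=1}^{r_n} t_i^n → t ≥ 0 and max_i t_i^n → 0 as n → ∞. Then for every f ∈ V one has S(t_1^n) S(t_2^n) ⋯ S(t_{r_n}^n) f → e^{tA} f in norm as n → ∞. -/
/-!
STATEMENT 0: Chernoff's theorem for non-uniform partitions.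

A strongly continuous family `S : [0,∞) → B(V)` with `S 0 = 1` is *proper* if
`‖S t‖ = 1 + O(t)` as `t ↓ 0` and there is a generator `A` of a strongly continuous
semigroup `(e^{tA})` such that `(S t f - f)/t → A f` as `t ↓ 0` for every `f = e^{aA} g`,
`a > 0`, `g ∈ V`.  We bundle the semigroup `(e^{tA})` together with `S`; the condition
on the derivative is expressed by requiring that for `f = e^{aA} g` the difference
quotients of `S` and of the semigroup have a common limit (which is `A f`).

The theorem: if `t_i^n > 0`, `∑_i t_i^n → t ≥ 0` and `max_i t_i^n → 0`, then
`S(t_1^n) ⋯ S(t_{r_n}^n) f → e^{tA} f` for every `f ∈ V`.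
-/

open Filter Topology

/-- A strongly continuous semigroup of bounded operators on `V` (the semigroup `e^{tA}`). -/
structure C0Semigroup (V : Type*) [NormedAddCommGroup V] [NormedSpace ℝ V] where
  T : ℝ → V →L[ℝ] V
  map_zero : T 0 = 1
  map_add : ∀ s t : ℝ, 0 ≤ s → 0 ≤ t → T (s + t) = (T s).comp (T t)
  strongCont : ∀ f : V, ContinuousOn (fun t => T t f) (Set.Ici (0 : ℝ))

/-- A proper family of bounded operators on `V`, together with the strongly continuous
semigroup `sg = (e^{tA})` generated by its derivative `A = DS` at `0`. The field `deriv`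
states that for every `f = e^{aA} g` with `a > 0` the limit `lim_{t↓0} (S t f - f)/t`
exists and coincides with `A f = lim_{t↓0} (e^{tA} f - f)/t`. -/
structure ProperFamily (V : Type*) [NormedAddCommGroup V] [NormedSpace ℝ V] where
  S : ℝ → V →L[ℝ] V
  sg : C0Semigroup V
  map_zero : S 0 = 1
  strongCont : ∀ f : V, ContinuousOn (fun t => S t f) (Set.Ici (0 : ℝ))
  normBound : (fun t => ‖S t‖ - 1) =O[𝓝[>] (0 : ℝ)] (fun t => t)
  deriv : ∀ a : ℝ, 0 < a → ∀ g : V, ∃ Af : V,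
    Tendsto (fun t => t⁻¹ • (sg.T t (sg.T a g) - sg.T a g)) (𝓝[>] (0 : ℝ)) (𝓝 Af) ∧
    Tendsto (fun t => t⁻¹ • (S t (sg.T a g) - sg.T a g)) (𝓝[>] (0 : ℝ)) (𝓝 Af)

section aux
variable {V : Type*} [NormedAddCommGroup V] [NormedSpace ℝ V]

lemma prod_apply_norm_le (S : ProperFamily V) (C : ℝ) :
    ∀ ℓ : List ℝ, (∀ τ ∈ ℓ, ‖S.S τ‖ ≤ Real.exp (C * τ)) → ∀ x : V,
      ‖(ℓ.map S.S).prod x‖ ≤ Real.exp (C * ℓ.sum) * ‖x‖ := by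
  intro ℓ
  induction ℓ with
  | nil => intro _ x; simp
  | cons τ ℓ ih =>
    intro hb x
    have hτ : ‖S.S τ‖ ≤ Real.exp (C * τ) := hb τ List.mem_cons_self
    have hℓ : ∀ τ' ∈ ℓ, ‖S.S τ'‖ ≤ Real.exp (C * τ') := fun τ' h => hb τ' (List.mem_cons_of_mem _ h)
    have h1 : ((τ :: ℓ).map S.S).prod x = S.S τ (((ℓ.map S.S)).prod x) := by
      simp [List.prod_cons]
    rw [h1]
    calc ‖S.S τ ((ℓ.map S.S).prod x)‖ ≤ ‖S.S τ‖ * ‖(ℓ.map S.S).prod x‖ :=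
          (S.S τ).le_opNorm _
      _ ≤ Real.exp (C * τ) * (Real.exp (C * ℓ.sum) * ‖x‖) := by
          apply mul_le_mul hτ (ih hℓ x) (norm_nonneg _) (Real.exp_pos _).le
      _ = Real.exp (C * (τ :: ℓ).sum) * ‖x‖ := by
          rw [List.sum_cons, mul_add, Real.exp_add]; ring

lemma telescope (S : ProperFamily V) (C ε : ℝ) (hC : 0 ≤ C) (hε : 0 ≤ ε) (f : V) :
    ∀ ℓ : List ℝ, (∀ τ ∈ ℓ, 0 < τ) → (∀ τ ∈ ℓ, ‖S.S τ‖ ≤ Real.exp (C * τ)) →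
      (∀ τ ∈ ℓ, ∀ s, 0 ≤ s → s ≤ ℓ.sum →
        ‖S.S τ (S.sg.T s f) - S.sg.T τ (S.sg.T s f)‖ ≤ ε * τ) →
      ‖(ℓ.map S.S).prod f - S.sg.T ℓ.sum f‖ ≤ Real.exp (C * ℓ.sum) * (ε * ℓ.sum) := by
  intro ℓ
  induction ℓ with
  | nil => intro _ _ _; simp [S.sg.map_zero]
  | cons τ ℓ ih =>
    intro hpos hb hkey
    have hτpos : 0 < τ := hpos τ List.mem_cons_self
    have hsumnn : 0 ≤ ℓ.sum := List.sum_nonneg (fun x hx => (hpos x (List.mem_cons_of_mem _ hx)).le)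
    have hsum' : ℓ.sum ≤ (τ :: ℓ).sum := by simp [List.sum_cons]; linarith
    have hTsplit : S.sg.T ((τ :: ℓ).sum) f = S.sg.T τ (S.sg.T ℓ.sum f) := by
      rw [List.sum_cons, S.sg.map_add τ ℓ.sum hτpos.le hsumnn]; rfl
    have hprod : ((τ :: ℓ).map S.S).prod f = S.S τ ((ℓ.map S.S).prod f) := by
      simp [List.prod_cons]
    have ihbound := ih (fun x hx => hpos x (List.mem_cons_of_mem _ hx))
      (fun x hx => hb x (List.mem_cons_of_mem _ hx))
      (fun x hx s hs hs' => hkey x (List.mem_cons_of_mem _ hx) s hs (hs'.trans hsum'))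
    have hkeyτ := hkey τ List.mem_cons_self ℓ.sum hsumnn hsum'
    have hbτ := hb τ List.mem_cons_self
    have e1 : Real.exp (C * τ) * Real.exp (C * ℓ.sum) = Real.exp (C * (τ :: ℓ).sum) := by
      rw [← Real.exp_add, List.sum_cons, mul_add]
    have honele : (1:ℝ) ≤ Real.exp (C * (τ :: ℓ).sum) := by
      rw [Real.one_le_exp_iff]
      have : 0 ≤ (τ :: ℓ).sum := by rw [List.sum_cons]; linarith
      positivity
    calc ‖((τ :: ℓ).map S.S).prod f - S.sg.T ((τ :: ℓ).sum) f‖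
        = ‖(S.S τ ((ℓ.map S.S).prod f) - S.S τ (S.sg.T ℓ.sum f))
            + (S.S τ (S.sg.T ℓ.sum f) - S.sg.T τ (S.sg.T ℓ.sum f))‖ := by
          rw [hprod, hTsplit]; congr 1; abel
      _ ≤ ‖S.S τ ((ℓ.map S.S).prod f) - S.S τ (S.sg.T ℓ.sum f)‖
            + ‖S.S τ (S.sg.T ℓ.sum f) - S.sg.T τ (S.sg.T ℓ.sum f)‖ := norm_add_le _ _
      _ ≤ ‖S.S τ‖ * ‖(ℓ.map S.S).prod f - S.sg.T ℓ.sum f‖ + ε * τ := by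
          gcongr
          rw [← map_sub]; exact (S.S τ).le_opNorm _
      _ ≤ Real.exp (C * τ) * (Real.exp (C * ℓ.sum) * (ε * ℓ.sum)) + ε * τ := by
          gcongr
      _ ≤ Real.exp (C * (τ :: ℓ).sum) * (ε * (τ :: ℓ).sum) := by
          rw [← mul_assoc, e1]
          have h1 : ε * τ ≤ Real.exp (C * (τ :: ℓ).sum) * (ε * τ) := by
            nlinarith [mul_nonneg hε hτpos.le]
          rw [List.sum_cons] at h1 ⊢
          nlinarith


lemma unif_small [CompleteSpace V] (S : ProperFamily V) {a : ℝ} (ha : 0 < a) (g : V)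
    (M : ℝ) {ε : ℝ} (hε : 0 < ε) :
    ∃ δ > 0, ∀ τ, 0 < τ → τ < δ → ∀ s, 0 ≤ s → s ≤ M →
      ‖S.S τ (S.sg.T s (S.sg.T a g)) - S.sg.T τ (S.sg.T s (S.sg.T a g))‖ ≤ ε * τ := by
  set T := S.sg.T with hT
  set F : ℝ → V →L[ℝ] V := fun τ => τ⁻¹ • ((S.S τ - T τ).comp (T a)) with hF
  have hFapp : ∀ τ (h : V), F τ h = τ⁻¹ • (S.S τ (T a h) - T τ (T a h)) := by
    intro τ h; simp [hF]
  have hzero : ∀ h : V, Tendsto (fun τ => F τ h) (𝓝[>] (0:ℝ)) (𝓝 0) := by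
    intro h
    obtain ⟨Af, h1, h2⟩ := S.deriv a ha h
    have h3 := h2.sub h1
    rw [sub_self] at h3
    refine h3.congr (fun τ => ?_)
    rw [hFapp, ← smul_sub]
    congr 1; abel
  have hzero' : ∀ h : V, ∀ {c : ℝ}, 0 < c → ∀ᶠ τ in 𝓝[>] (0:ℝ), ‖F τ h‖ < c := by
    intro h c hc
    have := (hzero h).norm
    rw [norm_zero] at this
    exact this.eventually_lt_const hc
  have hcont : ∀ h : V, ContinuousOn (fun τ => F τ h) (Set.Ioi (0:ℝ)) := by
    intro h
    have h1 : ContinuousOn (fun τ : ℝ => τ⁻¹) (Set.Ioi 0) :=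
      ContinuousOn.inv₀ continuousOn_id (fun τ hτ => ne_of_gt hτ)
    have h2 : ContinuousOn (fun τ => S.S τ (T a h) - T τ (T a h)) (Set.Ioi (0:ℝ)) :=
      ((S.strongCont (T a h)).mono Set.Ioi_subset_Ici_self).sub
        ((S.sg.strongCont (T a h)).mono Set.Ioi_subset_Ici_self)
    exact (h1.smul h2).congr (fun τ _ => hFapp τ h)
  have hpt : ∀ h : V, ∃ Cb, ∀ τ : Set.Ioc (0:ℝ) 1, ‖F τ h‖ ≤ Cb := by
    intro h
    obtain ⟨u, hu, hsub⟩ := mem_nhdsGT_iff_exists_Ioo_subset.mp (hzero' h one_pos)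
    obtain ⟨C2, hC2⟩ := (isCompact_Icc (a := u/2) (b := 1)).exists_bound_of_continuousOn
      ((hcont h).mono (fun x hx => lt_of_lt_of_le (half_pos hu) hx.1))
    refine ⟨max 1 C2, fun ⟨τ, hτ⟩ => ?_⟩
    rcases lt_or_ge τ u with hlt | hge
    · exact le_trans (hsub ⟨hτ.1, hlt⟩).le (le_max_left _ _)
    · refine le_trans (hC2 τ ⟨?_, hτ.2⟩) (le_max_right _ _)
      have := hu.out
      linarith
  obtain ⟨K, hK⟩ := banach_steinhaus (g := fun τ : Set.Ioc (0:ℝ) 1 => F τ) hpt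
  set K' := max K 0 with hK'def
  have hK'nn : 0 ≤ K' := le_max_right _ _
  have hK' : ∀ τ, 0 < τ → τ ≤ 1 → ‖F τ‖ ≤ K' :=
    fun τ h1 h2 => le_trans (hK ⟨τ, h1, h2⟩) (le_max_left _ _)
  have hKcomp : IsCompact ((fun s => T s g) '' Set.Icc 0 M) :=
    isCompact_Icc.image_of_continuousOn ((S.sg.strongCont g).mono (fun x hx => hx.1))
  set 𝒦 := (fun s => T s g) '' Set.Icc 0 M with h𝒦
  set ε' := ε / (2 * (K' + 1)) with hε'def
  have hε'pos : 0 < ε' := by positivity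
  obtain ⟨net, hnetsub, hnetfin, hnetcover⟩ := hKcomp.elim_finite_subcover_image
    (b := 𝒦) (c := fun h => Metric.ball h ε')
    (fun h _ => Metric.isOpen_ball)
    (fun x hx => Set.mem_biUnion hx (Metric.mem_ball_self hε'pos))
  have hev2 : ∀ᶠ τ in 𝓝[>] (0:ℝ), (∀ h ∈ net, ‖F τ h‖ < ε/2) ∧ τ < 1 := by
    refine Filter.Eventually.and ?_ ?_
    · exact (Filter.eventually_all_finite hnetfin).mpr (fun h _ => hzero' h (half_pos hε))
    · filter_upwards [Ioo_mem_nhdsGT_of_mem (Set.mem_Ico.mpr ⟨le_refl (0:ℝ), one_pos⟩)]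
        with τ hτ using hτ.2
  obtain ⟨δ, hδpos, hδsub⟩ := mem_nhdsGT_iff_exists_Ioo_subset.mp hev2
  refine ⟨δ, hδpos, fun τ hτpos hτδ s hs hsM => ?_⟩
  obtain ⟨hτnet, hτ1⟩ := hδsub ⟨hτpos, hτδ⟩
  have hx : T s g ∈ 𝒦 := ⟨s, ⟨hs, hsM⟩, rfl⟩
  obtain ⟨h0, hh0net, hball⟩ := Set.mem_iUnion₂.mp (hnetcover hx)
  have hFbound : ‖F τ (T s g)‖ ≤ ε := by
    have e1 : F τ (T s g) = F τ (T s g - h0) + F τ h0 := by rw [map_sub]; abel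
    calc ‖F τ (T s g)‖ ≤ ‖F τ (T s g - h0)‖ + ‖F τ h0‖ := by rw [e1]; exact norm_add_le _ _
      _ ≤ K' * ‖T s g - h0‖ + ε/2 := by
          gcongr
          · exact le_trans ((F τ).le_opNorm _)
              (mul_le_mul_of_nonneg_right (hK' τ hτpos hτ1.le) (norm_nonneg _))
          · exact (hτnet h0 hh0net).le
      _ ≤ K' * ε' + ε/2 := by
          gcongr
          exact le_of_lt (by simpa [dist_eq_norm] using Metric.mem_ball.mp hball)
      _ ≤ ε := by
          have : K' * ε' ≤ (K' + 1) * ε' := by nlinarith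
          have h2 : (K' + 1) * ε' = ε/2 := by
            rw [hε'def]; field_simp
          nlinarith
  have hcomm : T s (T a g) = T a (T s g) := by
    have e1 := S.sg.map_add s a hs ha.le
    have e2 := S.sg.map_add a s ha.le hs
    calc T s (T a g) = T (s + a) g := by rw [← hT] at e1; rw [e1]; rfl
      _ = T (a + s) g := by rw [add_comm]
      _ = T a (T s g) := by rw [← hT] at e2; rw [e2]; rfl
  rw [hcomm]
  have e3 : S.S τ (T a (T s g)) - T τ (T a (T s g)) = τ • F τ (T s g) := by
    rw [hFapp, smul_smul, mul_inv_cancel₀ (ne_of_gt hτpos), one_smul]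
  rw [e3, norm_smul, Real.norm_eq_abs, abs_of_pos hτpos]
  nlinarith [norm_nonneg (F τ (T s g))]



lemma S_norm_bound (S : ProperFamily V) :
    ∃ C, 0 ≤ C ∧ ∃ τ₀ > 0, ∀ τ, 0 < τ → τ ≤ τ₀ → ‖S.S τ‖ ≤ Real.exp (C * τ) := by
  obtain ⟨c, hc⟩ := S.normBound.bound
  obtain ⟨u, hu, hsub⟩ := mem_nhdsGT_iff_exists_Ioo_subset.mp hc
  have hu' : (0:ℝ) < u := hu
  refine ⟨|c|, abs_nonneg c, u/2, half_pos hu', fun τ h1 h2 => ?_⟩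
  have hmem : ‖‖S.S τ‖ - 1‖ ≤ c * ‖τ‖ := hsub ⟨h1, lt_of_le_of_lt h2 (half_lt_self hu')⟩
  rw [Real.norm_eq_abs, Real.norm_eq_abs, abs_of_pos h1] at hmem
  have h3 : ‖S.S τ‖ - 1 ≤ |c| * τ := by
    calc ‖S.S τ‖ - 1 ≤ |‖S.S τ‖ - 1| := le_abs_self _
      _ ≤ c * τ := hmem
      _ ≤ |c| * τ := by nlinarith [le_abs_self c]
  nlinarith [Real.add_one_le_exp (|c| * τ)]

end aux

/-- **Chernoff's theorem along non-uniform partitions.**  Let `S` be a proper family of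
bounded operators on the Banach space `V`, with `A = DS` and associated semigroup
`e^{tA} = S.sg`.  Let `(t_i^n)_{1 ≤ i ≤ r_n}` be positive numbers with
`∑_{i=1}^{r_n} t_i^n → t ≥ 0` and `max_i t_i^n → 0`.  Then for every `f ∈ V`,
`S(t_1^n) ⋯ S(t_{r_n}^n) f → e^{tA} f` as `n → ∞`. -/
theorem chernoff_nonuniform_partitions
    {V : Type*} [NormedAddCommGroup V] [NormedSpace ℝ V] [CompleteSpace V]
    (S : ProperFamily V) (t : ℝ) (ht : 0 ≤ t)
    (r : ℕ → ℕ) (ts : (n : ℕ) → Fin (r n) → ℝ)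
    (hpos : ∀ n i, 0 < ts n i)
    (hsum : Tendsto (fun n => ∑ i, ts n i) atTop (𝓝 t))
    (hmax : Tendsto (fun n => ⨆ i, ts n i) atTop (𝓝 0))
    (f : V) :
    Tendsto (fun n => ((List.ofFn fun i => S.S (ts n i)).prod) f) atTop
      (𝓝 (S.sg.T t f)) := by

  obtain ⟨C, hC0, τ₀, hτ₀, hSC⟩ := S_norm_bound S
  set T := S.sg.T with hT
  set σ : ℕ → ℝ := fun n => ∑ i, ts n i with hσ
  have hσnn : ∀ n, 0 ≤ σ n := fun n => Finset.sum_nonneg (fun i _ => (hpos n i).le)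
  have hℓsum : ∀ n, (List.ofFn (ts n)).sum = σ n := fun n => List.sum_ofFn
  have hProdEq : ∀ n, (List.ofFn fun i => S.S (ts n i)).prod
      = ((List.ofFn (ts n)).map S.S).prod := by
    intro n; rw [List.map_ofFn]; rfl
  have hlpos : ∀ n, ∀ τ ∈ List.ofFn (ts n), 0 < τ := by
    intro n τ hτ
    obtain ⟨i, rfl⟩ := List.mem_ofFn.mp hτ
    exact hpos n i
  have hmem_lt : ∀ {d : ℝ}, 0 < d → ∀ᶠ n in atTop, ∀ τ ∈ List.ofFn (ts n), τ < d := by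
    intro d hd
    filter_upwards [hmax.eventually_lt_const hd] with n hn τ hτ
    obtain ⟨i, rfl⟩ := List.mem_ofFn.mp hτ
    exact lt_of_le_of_lt (le_ciSup (Set.finite_range _).bddAbove i) hn
  have hσle : ∀ᶠ n in atTop, σ n ≤ t + 1 := by
    filter_upwards [hsum.eventually_lt_const (lt_add_one t)] with n hn using hn.le
  -- the dense case f = T a g
  have key : ∀ a : ℝ, 0 < a → ∀ g : V,
      Tendsto (fun n => ((List.ofFn fun i => S.S (ts n i)).prod) (T a g))
        atTop (𝓝 (T t (T a g))) := by
    intro a ha g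
    set f' := T a g with hf'
    rw [Metric.tendsto_nhds]
    intro ε hε
    have h2 : Tendsto (fun n => T (σ n) f') atTop (𝓝 (T t f')) := by
      have hcw : ContinuousWithinAt (fun s => T s f') (Set.Ici 0) t :=
        S.sg.strongCont f' t ht
      have hσt : Tendsto σ atTop (𝓝[Set.Ici 0] t) :=
        tendsto_nhdsWithin_of_tendsto_nhds_of_eventually_within σ hsum
          (Filter.Eventually.of_forall hσnn)
      exact hcw.tendsto.comp hσt
    have h2' : ∀ᶠ n in atTop, dist (T (σ n) f') (T t f') < ε/2 :=
      Metric.tendsto_nhds.mp h2 _ (half_pos hε)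
    have ht1 : (0:ℝ) < t + 1 := by linarith
    set X₁ := Real.exp (C*(t+1)) * (t+1) with hX₁
    have hX₁pos : 0 < X₁ := by positivity
    set ε₁ := ε / (2 * (X₁ + 1)) with hε₁
    have hε₁pos : 0 < ε₁ := by positivity
    clear_value X₁ ε₁
    obtain ⟨δ, hδpos, hδ⟩ := unif_small S ha g (t+1) hε₁pos
    filter_upwards [hmem_lt (lt_min hδpos hτ₀), hσle, h2'] with n hlt hσn h2n
    have htel := telescope S C ε₁ hC0 hε₁pos.le f' (List.ofFn (ts n)) (hlpos n)
      (fun τ hτ => hSC τ (hlpos n τ hτ) (le_of_lt (lt_of_lt_of_le (hlt τ hτ) (min_le_right _ _))))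
      (fun τ hτ s hs hs' => hδ τ (hlpos n τ hτ)
        (lt_of_lt_of_le (hlt τ hτ) (min_le_left _ _)) s hs
        (by rw [hℓsum n] at hs'; linarith))
    rw [hℓsum n] at htel
    calc dist ((List.ofFn fun i => S.S (ts n i)).prod f') (T t f')
        ≤ dist ((List.ofFn fun i => S.S (ts n i)).prod f') (T (σ n) f')
          + dist (T (σ n) f') (T t f') := dist_triangle _ _ _
      _ < ε/2 + ε/2 := by
          apply add_lt_add_of_le_of_lt _ h2n
          rw [dist_eq_norm, hProdEq n]
          refine htel.trans ?_
          have e1 : Real.exp (C * σ n) * (ε₁ * σ n) ≤ X₁ * ε₁ := by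
            rw [hX₁]
            have : Real.exp (C * σ n) ≤ Real.exp (C * (t+1)) := by
              apply Real.exp_le_exp.mpr
              nlinarith
            nlinarith [mul_le_mul_of_nonneg_right this (mul_nonneg hε₁pos.le (hσnn n)),
              mul_le_mul_of_nonneg_left hσn
                (mul_nonneg (Real.exp_pos (C*(t+1))).le hε₁pos.le)]
          refine e1.trans ?_
          have h4 : X₁ * ε₁ ≤ (X₁ + 1) * ε₁ := by nlinarith
          have h5 : (X₁ + 1) * ε₁ = ε/2 := by
            rw [hε₁]; field_simp
          linarith
      _ = ε := by ring
  -- general case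
  rw [Metric.tendsto_nhds]
  intro ε hε
  set X := Real.exp (C*(t+1)) + ‖T t‖ + 1 with hX
  have hXpos : 0 < X := by positivity
  set ε₂ := ε / (3 * X) with hε₂
  have hε₂pos : 0 < ε₂ := by positivity
  clear_value X ε₂
  have hcw0 : Tendsto (fun s => T s f - f) (𝓝[>] (0:ℝ)) (𝓝 0) := by
    have h := (S.sg.strongCont f 0 Set.self_mem_Ici).tendsto
    have hzero0 : T 0 f = f := by rw [hT, S.sg.map_zero]; rfl
    rw [hzero0] at h
    have h' := h.mono_left (nhdsWithin_mono 0 Set.Ioi_subset_Ici_self)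
    have := h'.sub_const f
    rwa [sub_self] at this
  have hev : ∀ᶠ a in 𝓝[>] (0:ℝ), ‖T a f - f‖ < ε₂ := by
    have := hcw0.norm
    rw [norm_zero] at this
    exact this.eventually_lt_const hε₂pos
  obtain ⟨a, haf, ha⟩ := (hev.and self_mem_nhdsWithin).exists
  set h' := T a f with hh'
  have hmid : ∀ᶠ n in atTop, dist ((List.ofFn fun i => S.S (ts n i)).prod h') (T t h') < ε/3 :=
    Metric.tendsto_nhds.mp (key a ha f) _ (by positivity)
  filter_upwards [hmem_lt hτ₀, hσle, hmid] with n hlt hσn hmidn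
  have hPbound : ∀ x : V, ‖((List.ofFn (ts n)).map S.S).prod x‖ ≤ Real.exp (C*(t+1)) * ‖x‖ := by
    intro x
    refine (prod_apply_norm_le S C (List.ofFn (ts n))
      (fun τ hτ => hSC τ (hlpos n τ hτ) (hlt τ hτ).le) x).trans ?_
    have : Real.exp (C * (List.ofFn (ts n)).sum) ≤ Real.exp (C * (t+1)) := by
      apply Real.exp_le_exp.mpr
      rw [hℓsum n]
      nlinarith
    exact mul_le_mul_of_nonneg_right this (norm_nonneg x)
  have hd1 : dist ((List.ofFn fun i => S.S (ts n i)).prod f)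
      ((List.ofFn fun i => S.S (ts n i)).prod h') < ε/3 := by
    rw [dist_eq_norm, hProdEq n, ← map_sub]
    have hb := hPbound (f - h')
    have hfh : ‖f - h'‖ < ε₂ := by rw [hh', norm_sub_rev]; exact haf
    have e1 : Real.exp (C*(t+1)) * ‖f - h'‖ < Real.exp (C*(t+1)) * ε₂ :=
      mul_lt_mul_of_pos_left hfh (Real.exp_pos _)
    have e2 : Real.exp (C*(t+1)) * ε₂ ≤ X * ε₂ := by
      rw [hX]; nlinarith [norm_nonneg (T t)]
    have e3 : X * ε₂ = ε/3 := by rw [hε₂]; field_simp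
    linarith
  have hd3 : dist (T t h') (T t f) < ε/3 := by
    rw [dist_eq_norm, ← map_sub]
    have hb : ‖T t (h' - f)‖ ≤ ‖T t‖ * ‖h' - f‖ := (T t).le_opNorm _
    have hfh : ‖h' - f‖ < ε₂ := haf
    have e1 : ‖T t‖ * ‖h' - f‖ ≤ ‖T t‖ * ε₂ :=
      mul_le_mul_of_nonneg_left hfh.le (norm_nonneg _)
    have e2 : ‖T t‖ * ε₂ < X * ε₂ := by
      apply mul_lt_mul_of_pos_right _ hε₂pos
      rw [hX]; nlinarith [Real.exp_pos (C*(t+1))]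
    have e3 : X * ε₂ = ε/3 := by rw [hε₂]; field_simp
    linarith
  calc dist ((List.ofFn fun i => S.S (ts n i)).prod f) (T t f)
      ≤ dist ((List.ofFn fun i => S.S (ts n i)).prod f)
          ((List.ofFn fun i => S.S (ts n i)).prod h')
        + dist ((List.ofFn fun i => S.S (ts n i)).prod h') (T t h')
        + dist (T t h') (T t f) := dist_triangle4 _ _ _ _
    _ < ε/3 + ε/3 + ε/3 := by
        apply add_lt_add (add_lt_add hd1 hmidn) hd3
    _ = ε := by ring
end

section
/- Let S be a proper family of bounded linear operators on a Banach space V, and let (c(t))_{t≥0} be a family of bounded linear operators on V with ‖c(t) − I‖ = o(t) as t ↓ 0. Then the family T defined by T(t) = c(t) S(t) is proper and Chernoff equivalent to S. -/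
/-!
STATEMENT 2: If `S` is a proper family and `(c t)` is a family of bounded operators with
`‖c t - I‖ = o(t)` as `t ↓ 0`, then `T t = c t ∘ S t` is proper and Chernoff
equivalent to `S`.
-/

open Filter Topology

/-- Local uniform boundedness of a strongly continuous family (Banach–Steinhaus). -/
lemma locBound {V : Type*} [NormedAddCommGroup V] [NormedSpace ℝ V] [CompleteSpace V]
    (c : ℝ → V →L[ℝ] V) (hccont : ∀ f : V, ContinuousOn (fun t => c t f) (Set.Ici (0 : ℝ)))
    (b : ℝ) : ∃ C, ∀ t ∈ Set.Icc (0 : ℝ) b, ‖c t‖ ≤ C := by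
  obtain ⟨C, hC⟩ := banach_steinhaus (g := fun t : Set.Icc (0 : ℝ) b => c t) (by
    intro x
    obtain ⟨C, hC⟩ := (isCompact_Icc (a := (0:ℝ)) (b := b)).exists_bound_of_continuousOn
      ((hccont x).mono Set.Icc_subset_Ici_self)
    exact ⟨C, fun i => hC i i.2⟩)
  exact ⟨C, fun t ht => hC ⟨t, ht⟩⟩

/-- **Multiplicative perturbation.**  Let `S` be a proper family on the Banach space `V`
and let `(c t)` be a (strongly continuous) family of bounded operators with `c 0 = 1`
and `‖c t - I‖ = o(t)` as `t ↓ 0`.  Then the family `T t = c t ∘ S t` is proper and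
Chernoff equivalent to `S` (same derivative, hence the same associated semigroup). -/
theorem chernoff_equivalent_of_multiplicative_perturbation
    {V : Type*} [NormedAddCommGroup V] [NormedSpace ℝ V] [CompleteSpace V]
    (S : ProperFamily V) (c : ℝ → V →L[ℝ] V)
    (hc0 : c 0 = 1)
    (hccont : ∀ f : V, ContinuousOn (fun t => c t f) (Set.Ici (0 : ℝ)))
    (hcsmall : (fun t => ‖c t - 1‖) =o[𝓝[>] (0 : ℝ)] (fun t => t)) :
    ∃ TP : ProperFamily V, TP.S = (fun t => (c t).comp (S.S t)) ∧ TP.sg = S.sg := by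
  -- eventual smallness facts on 𝓝[>] 0
  have hmem : ∀ᶠ t in 𝓝[>] (0:ℝ), 0 < t ∧ t ≤ 1 := by
    filter_upwards [self_mem_nhdsWithin,
      Ioo_mem_nhdsGT_of_mem (by norm_num : (0:ℝ) ∈ Set.Ico 0 1)] with t ht ht' using
      ⟨ht, le_of_lt ht'.2⟩
  have hc1 : ∀ᶠ t in 𝓝[>] (0:ℝ), ‖c t - 1‖ ≤ t := by
    filter_upwards [hcsmall.def one_pos, self_mem_nhdsWithin] with t ht ht'
    simpa [abs_of_pos (Set.mem_Ioi.mp ht')] using ht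
  obtain ⟨K, hKpos, hK⟩ := S.normBound.exists_pos
  have hK' : ∀ᶠ t in 𝓝[>] (0:ℝ), |‖S.S t‖ - 1| ≤ K * t := by
    filter_upwards [hK.bound, self_mem_nhdsWithin] with t ht ht'
    simpa [abs_of_pos (Set.mem_Ioi.mp ht')] using ht
  refine ⟨⟨fun t => (c t).comp (S.S t), S.sg, ?_, ?_, ?_, ?_⟩, rfl, rfl⟩
  · ext x; simp [hc0, S.map_zero]
  · -- strong continuity
    intro f t₀ ht₀
    obtain ⟨C, hC⟩ := locBound c hccont (t₀ + 1)
    have hC0 : 0 ≤ C := le_trans (norm_nonneg _) (hC 0 ⟨le_rfl, by linarith [ht₀.out]⟩)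
    have hev : ∀ᶠ t in 𝓝[Set.Ici 0] t₀, t ∈ Set.Icc (0:ℝ) (t₀ + 1) := by
      filter_upwards [self_mem_nhdsWithin,
        eventually_nhdsWithin_of_eventually_nhds
          (eventually_le_nhds (by linarith : t₀ < t₀ + 1))] with t ht ht'
      exact ⟨ht, ht'⟩
    have h1 : Tendsto (fun t => c t (S.S t f) - c t (S.S t₀ f)) (𝓝[Set.Ici 0] t₀) (𝓝 0) := by
      apply squeeze_zero_norm' (a := fun t => C * ‖S.S t f - S.S t₀ f‖)
      · filter_upwards [hev] with t ht
        calc ‖c t (S.S t f) - c t (S.S t₀ f)‖ = ‖c t (S.S t f - S.S t₀ f)‖ := by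
              rw [map_sub]
          _ ≤ ‖c t‖ * ‖S.S t f - S.S t₀ f‖ := (c t).le_opNorm _
          _ ≤ C * ‖S.S t f - S.S t₀ f‖ :=
              mul_le_mul_of_nonneg_right (hC t ht) (norm_nonneg _)
      · have h := ((S.strongCont f t₀ ht₀).sub
          (continuousWithinAt_const (b := S.S t₀ f))).norm
        have h' : Tendsto (fun t => ‖S.S t f - S.S t₀ f‖) (𝓝[Set.Ici 0] t₀) (𝓝 0) := by
          have h2 : Tendsto (fun t => ‖S.S t f - S.S t₀ f‖) (𝓝[Set.Ici 0] t₀)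
              (𝓝 ‖S.S t₀ f - S.S t₀ f‖) := h
          rwa [sub_self, norm_zero] at h2
        simpa using (tendsto_const_nhds (x := C)).mul h'
    have h2 : Tendsto (fun t => c t (S.S t₀ f)) (𝓝[Set.Ici 0] t₀) (𝓝 (c t₀ (S.S t₀ f))) :=
      hccont (S.S t₀ f) t₀ ht₀
    have := h1.add h2
    simp only [zero_add] at this
    refine this.congr (fun t => by simp)
  · -- norm bound
    rw [Asymptotics.isBigO_iff]
    refine ⟨1 + 2 * K, ?_⟩
    filter_upwards [hmem, hc1, hK'] with t ⟨htpos, ht1⟩ hct hst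
    have hSle : ‖S.S t‖ ≤ 1 + K * t := by
      have := abs_le.1 hst; linarith [this.2]
    have hSge : 1 - K * t ≤ ‖S.S t‖ := by
      have := abs_le.1 hst; linarith [this.1]
    have hcle : ‖c t‖ ≤ 1 + t := by
      have h := norm_add_le (c t - 1) 1
      rw [sub_add_cancel] at h
      have h1 : ‖(1 : V →L[ℝ] V)‖ ≤ 1 := ContinuousLinearMap.norm_id_le
      linarith
    have hKt : K * t ≤ K := by nlinarith
    have hup : ‖(c t).comp (S.S t)‖ - 1 ≤ (1 + 2 * K) * t := by
      have h := ((c t).opNorm_comp_le (S.S t))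
      have : ‖(c t).comp (S.S t)‖ ≤ (1 + t) * (1 + K * t) :=
        h.trans (mul_le_mul hcle hSle (norm_nonneg _) (by linarith))
      nlinarith
    have hlow : -((1 + 2 * K) * t) ≤ ‖(c t).comp (S.S t)‖ - 1 := by
      have hdecomp : (c t).comp (S.S t) = S.S t + (c t - 1).comp (S.S t) := by
        ext x; simp
      have h2 : ‖(c t - 1).comp (S.S t)‖ ≤ t * (1 + K * t) :=
        ((c t - 1).opNorm_comp_le (S.S t)).trans
          (mul_le_mul hct hSle (norm_nonneg _) (le_of_lt htpos))
      have h3 : ‖S.S t‖ - ‖(c t - 1).comp (S.S t)‖ ≤ ‖(c t).comp (S.S t)‖ := by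
        rw [hdecomp]
        have := norm_add_le (S.S t + (c t - 1).comp (S.S t)) (-(c t - 1).comp (S.S t))
        simp only [add_neg_cancel_right, norm_neg] at this
        linarith
      nlinarith
    rw [Real.norm_eq_abs, Real.norm_eq_abs, abs_of_pos htpos, abs_le]
    exact ⟨hlow, hup⟩
  · -- derivative
    intro a ha g
    obtain ⟨Af, h1, h2⟩ := S.deriv a ha g
    refine ⟨Af, h1, ?_⟩
    set f := S.sg.T a g with hf
    have hSf : Tendsto (fun t => ‖S.S t f‖) (𝓝[>] (0:ℝ)) (𝓝 ‖f‖) := by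
      have := ((S.strongCont f 0 Set.self_mem_Ici).mono_left
        (nhdsWithin_mono 0 Set.Ioi_subset_Ici_self)).norm
      simpa [S.map_zero] using
        (this : Tendsto (fun t => ‖S.S t f‖) (𝓝[>] (0:ℝ)) (𝓝 ‖S.S 0 f‖))
    have hbd : ∀ᶠ t in 𝓝[>] (0:ℝ), ‖S.S t f‖ ≤ ‖f‖ + 1 :=
      hSf.eventually (eventually_le_nhds (by linarith [norm_nonneg f]))
    have hdiv : Tendsto (fun t => ‖c t - 1‖ / t) (𝓝[>] (0:ℝ)) (𝓝 0) :=
      hcsmall.tendsto_div_nhds_zero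
    have hz : Tendsto (fun t => t⁻¹ • ((c t - 1) (S.S t f))) (𝓝[>] (0:ℝ)) (𝓝 0) := by
      apply squeeze_zero_norm' (a := fun t => (‖c t - 1‖ / t) * (‖f‖ + 1))
      · filter_upwards [hbd, self_mem_nhdsWithin] with t hb (ht : (0:ℝ) < t)
        rw [norm_smul]
        calc ‖t⁻¹‖ * ‖(c t - 1) (S.S t f)‖
            ≤ t⁻¹ * (‖c t - 1‖ * ‖S.S t f‖) := by
              rw [Real.norm_eq_abs, abs_of_pos (inv_pos.2 ht)]
              exact mul_le_mul_of_nonneg_left ((c t - 1).le_opNorm _) (le_of_lt (inv_pos.2 ht))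
          _ ≤ t⁻¹ * (‖c t - 1‖ * (‖f‖ + 1)) := by
              refine mul_le_mul_of_nonneg_left ?_ (le_of_lt (inv_pos.2 ht))
              exact mul_le_mul_of_nonneg_left hb (norm_nonneg _)
          _ = (‖c t - 1‖ / t) * (‖f‖ + 1) := by field_simp
      · simpa using hdiv.mul (tendsto_const_nhds (x := ‖f‖ + 1))
    have := h2.add hz
    simp only [add_zero] at this
    refine this.congr (fun t => ?_)
    rw [← smul_add]
    congr 1
    simp
end

section
/- Let (L,d) be a separable metric space. For a function φ : [0,1] → L and δ > 0 set w(φ, δ) = sup{ d(φ(s), φ(t)) : s, t ∈ [0,1], |s − t| < δ }. Let (ℙ_k) be a sequence of finite measures on the Skorokhod space D_L[0,1] converging weakly to a finite measure ℙ₀ which is concentrated on the set C_L[0,1] of continuous paths. Then for every ε > 0, limsup_k ℙ_k{ ω ∈ D_L[0,1] : w(ω, δ) > ε } → 0 as δ ↓ 0. -/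
/-!
STATEMENT 5 (Lemma `margstraff`): Let `(L,d)` be a separable metric space,
`w(φ,δ) = sup{ d(φ s, φ t) : |s−t| < δ }` the modulus of continuity of a path
`φ : [0,1] → L`.  If a sequence `(ℙ_k)` of finite measures on the Skorokhod space
`D_L[0,1]` converges weakly to a finite measure `ℙ₀` concentrated on the continuous
paths `C_L[0,1]`, then for every `ε > 0`,
`limsup_k ℙ_k{ ω : w(ω,δ) > ε } → 0` as `δ ↓ 0`.
-/

open Filter Topology MeasureTheory Set ENNReal

/-- The time interval `[0,1]`. -/
abbrev UI : Set ℝ := Set.Icc (0 : ℝ) 1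

/-- A path `ω : [0,1] → L` is càdlàg: right-continuous with left limits. -/
def IsCadlag {L : Type*} [MetricSpace L] (ω : UI → L) : Prop :=
  (∀ t : UI, ContinuousWithinAt ω (Set.Ici t) t) ∧
  (∀ t : UI, ∃ l : L, Tendsto ω (𝓝[<] t) (𝓝 l))

/-- The Skorokhod path space `D_L[0,1]` of càdlàg paths. -/
def SkorokhodSpace (L : Type*) [MetricSpace L] : Type _ := {ω : UI → L // IsCadlag ω}

/-- The Skorokhod distance: infimum over increasing reparametrizations `e` of `[0,1]`
of the maximum of the time distortion and the (bounded) uniform distance of the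
reparametrized paths. -/
noncomputable def skorokhodDist {L : Type*} [MetricSpace L] (ω₁ ω₂ : UI → L) : ℝ :=
  ⨅ e : (↥UI) ≃o (↥UI),
    max (⨆ t : UI, |((e t).1 : ℝ) - (t.1 : ℝ)|)
      (⨆ t : UI, min (dist (ω₁ (e t)) (ω₂ t)) 1)

/-- The Skorokhod topology on `D_L[0,1]`, generated by the `skorokhodDist`-balls. -/
noncomputable instance skorokhodTopology (L : Type*) [MetricSpace L] :
    TopologicalSpace (SkorokhodSpace L) :=
  TopologicalSpace.generateFrom
    {s | ∃ (ω : SkorokhodSpace L) (ε : ℝ), 0 < ε ∧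
      s = {ω' : SkorokhodSpace L | skorokhodDist ω.1 ω'.1 < ε}}

/-- The Borel σ-algebra of the Skorokhod topology. -/
noncomputable instance skorokhodMeasurable (L : Type*) [MetricSpace L] :
    MeasurableSpace (SkorokhodSpace L) := borel _

/-- The modulus of continuity `w(φ, δ) = sup{ d(φ(s),φ(t)) : s,t ∈ [0,1], |s−t| < δ }`
(valued in `ℝ≥0∞`). -/
noncomputable def modCont {L : Type*} [MetricSpace L] (φ : UI → L) (δ : ℝ) : ℝ≥0∞ :=
  ⨆ (s : UI) (t : UI) (_ : |(s.1 : ℝ) - (t.1 : ℝ)| < δ), edist (φ s) (φ t)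



namespace SkorokhodAux

variable {L : Type*} [MetricSpace L]

instance : Inhabited ↥UI := ⟨⟨0, le_refl 0, zero_le_one⟩⟩

/-- The functional inside the infimum defining `skorokhodDist`. -/
noncomputable def F (ω₁ ω₂ : UI → L) (e : (↥UI) ≃o (↥UI)) : ℝ :=
  max (⨆ t : UI, |((e t).1 : ℝ) - (t.1 : ℝ)|)
    (⨆ t : UI, min (dist (ω₁ (e t)) (ω₂ t)) 1)

lemma skorokhodDist_eq (ω₁ ω₂ : UI → L) : skorokhodDist ω₁ ω₂ = ⨅ e, F ω₁ ω₂ e := rfl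

lemma timeTerm_le_one (e : (↥UI) ≃o (↥UI)) (t : UI) : |((e t).1 : ℝ) - (t.1 : ℝ)| ≤ 1 := by
  obtain ⟨h1, h2⟩ := (e t).2
  obtain ⟨h3, h4⟩ := t.2
  rw [abs_le]; constructor <;> linarith

lemma bddAbove_time (e : (↥UI) ≃o (↥UI)) :
    BddAbove (Set.range fun t : UI => |((e t).1 : ℝ) - (t.1 : ℝ)|) := by
  refine ⟨1, ?_⟩; rintro _ ⟨t, rfl⟩; exact timeTerm_le_one e t

lemma distTerm_le_one (ω₁ ω₂ : UI → L) (e : (↥UI) ≃o (↥UI)) (t : UI) :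
    min (dist (ω₁ (e t)) (ω₂ t)) 1 ≤ 1 := min_le_right _ _

lemma bddAbove_dist (ω₁ ω₂ : UI → L) (e : (↥UI) ≃o (↥UI)) :
    BddAbove (Set.range fun t : UI => min (dist (ω₁ (e t)) (ω₂ t)) 1) := by
  refine ⟨1, ?_⟩; rintro _ ⟨t, rfl⟩; exact min_le_right _ _

lemma F_nonneg (ω₁ ω₂ : UI → L) (e : (↥UI) ≃o (↥UI)) : 0 ≤ F ω₁ ω₂ e :=
  le_max_of_le_left (le_ciSup_of_le (bddAbove_time e) default (abs_nonneg _))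

lemma bddBelow_F (ω₁ ω₂ : UI → L) : BddBelow (Set.range (F ω₁ ω₂)) := by
  refine ⟨0, ?_⟩; rintro _ ⟨e, rfl⟩; exact F_nonneg ω₁ ω₂ e

lemma skorokhodDist_nonneg (ω₁ ω₂ : UI → L) : 0 ≤ skorokhodDist ω₁ ω₂ :=
  le_ciInf (F_nonneg ω₁ ω₂)

lemma skorokhodDist_self (ω : UI → L) : skorokhodDist ω ω = 0 := by
  refine le_antisymm ?_ (skorokhodDist_nonneg ω ω)
  have h := ciInf_le (bddBelow_F ω ω) (OrderIso.refl ↥UI)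
  rw [skorokhodDist_eq]
  refine h.trans_eq ?_
  have h1 : (⨆ t : UI, |((OrderIso.refl ↥UI t).1 : ℝ) - (t.1 : ℝ)|) = 0 := by
    simp [OrderIso.refl_apply]
  have h2 : (⨆ t : UI, min (dist (ω (OrderIso.refl ↥UI t)) (ω t)) 1) = 0 := by
    simp [OrderIso.refl_apply, ciSup_const]
  rw [F, h1, h2, max_self]

lemma F_symm_le (ω₁ ω₂ : UI → L) (e : (↥UI) ≃o (↥UI)) :
    F ω₂ ω₁ e.symm ≤ F ω₁ ω₂ e := by
  refine max_le_max ?_ ?_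
  · refine ciSup_le fun t => le_ciSup_of_le (bddAbove_time e) (e.symm t) ?_
    rw [OrderIso.apply_symm_apply, abs_sub_comm]
  · refine ciSup_le fun t => le_ciSup_of_le (bddAbove_dist ω₁ ω₂ e) (e.symm t) ?_
    rw [OrderIso.apply_symm_apply, dist_comm]

lemma skorokhodDist_comm (ω₁ ω₂ : UI → L) : skorokhodDist ω₁ ω₂ = skorokhodDist ω₂ ω₁ := by
  have key : ∀ (a b : UI → L), skorokhodDist a b ≤ skorokhodDist b a := by
    intro a b
    refine le_ciInf fun e => ?_
    exact (ciInf_le (bddBelow_F a b) e.symm).trans (F_symm_le b a e)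
  exact le_antisymm (key ω₁ ω₂) (key ω₂ ω₁)

lemma min_one_add (a b c : ℝ) (hb : 0 ≤ b) (hc : 0 ≤ c) (h : a ≤ b + c) :
    min a 1 ≤ min b 1 + min c 1 := by
  rcases le_or_gt 1 b with hb1 | hb1
  · have : min b 1 = 1 := min_eq_right hb1
    rw [this]
    have := min_le_right a 1
    have := le_min hc zero_le_one
    linarith [le_min hc zero_le_one, min_le_right a 1]
  · rcases le_or_gt 1 c with hc1 | hc1
    · rw [min_eq_right hc1]
      linarith [min_le_right a 1, le_min hb zero_le_one]
    · rw [min_eq_left hb1.le, min_eq_left hc1.le]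
      exact (min_le_left a 1).trans h

lemma F_trans_le (ω₁ ω₂ ω₃ : UI → L) (e₁ e₂ : (↥UI) ≃o (↥UI)) :
    F ω₁ ω₃ (e₂.trans e₁) ≤ F ω₁ ω₂ e₁ + F ω₂ ω₃ e₂ := by
  have htime : (⨆ t : UI, |(((e₂.trans e₁) t).1 : ℝ) - (t.1 : ℝ)|) ≤
      (⨆ t : UI, |((e₁ t).1 : ℝ) - (t.1 : ℝ)|) + ⨆ t : UI, |((e₂ t).1 : ℝ) - (t.1 : ℝ)| := by
    refine ciSup_le fun t => ?_
    have h1 : |(((e₂.trans e₁) t).1 : ℝ) - (t.1 : ℝ)| ≤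
        |((e₁ (e₂ t)).1 : ℝ) - ((e₂ t).1 : ℝ)| + |((e₂ t).1 : ℝ) - (t.1 : ℝ)| := by
      exact abs_sub_le _ _ _
    exact h1.trans (add_le_add (le_ciSup (bddAbove_time e₁) (e₂ t)) (le_ciSup (bddAbove_time e₂) t))
  have hdist : (⨆ t : UI, min (dist (ω₁ ((e₂.trans e₁) t)) (ω₃ t)) 1) ≤
      (⨆ t : UI, min (dist (ω₁ (e₁ t)) (ω₂ t)) 1) + ⨆ t : UI, min (dist (ω₂ (e₂ t)) (ω₃ t)) 1 := by
    refine ciSup_le fun t => ?_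
    have h1 : min (dist (ω₁ ((e₂.trans e₁) t)) (ω₃ t)) 1 ≤
        min (dist (ω₁ (e₁ (e₂ t))) (ω₂ (e₂ t))) 1 + min (dist (ω₂ (e₂ t)) (ω₃ t)) 1 :=
      min_one_add _ _ _ dist_nonneg dist_nonneg (dist_triangle _ _ _)
    exact h1.trans (add_le_add (le_ciSup (bddAbove_dist ω₁ ω₂ e₁) (e₂ t))
      (le_ciSup (bddAbove_dist ω₂ ω₃ e₂) t))
  exact max_le (htime.trans (add_le_add (le_max_left _ _) (le_max_left _ _)))
    (hdist.trans (add_le_add (le_max_right _ _) (le_max_right _ _)))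

lemma skorokhodDist_triangle (ω₁ ω₂ ω₃ : UI → L) :
    skorokhodDist ω₁ ω₃ ≤ skorokhodDist ω₁ ω₂ + skorokhodDist ω₂ ω₃ := by
  have key : ∀ e₁ e₂, skorokhodDist ω₁ ω₃ ≤ F ω₁ ω₂ e₁ + F ω₂ ω₃ e₂ := fun e₁ e₂ =>
    (ciInf_le (bddBelow_F ω₁ ω₃) (e₂.trans e₁)).trans (F_trans_le ω₁ ω₂ ω₃ e₁ e₂)
  have h2 : ∀ e₁, skorokhodDist ω₁ ω₃ - F ω₁ ω₂ e₁ ≤ skorokhodDist ω₂ ω₃ := fun e₁ =>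
    le_ciInf fun e₂ => sub_le_iff_le_add'.mpr (key e₁ e₂)
  have h3 : skorokhodDist ω₁ ω₃ - skorokhodDist ω₂ ω₃ ≤ skorokhodDist ω₁ ω₂ :=
    le_ciInf fun e₁ => sub_le_comm.mp (h2 e₁)
  linarith

end SkorokhodAux


section Topo
open TopologicalSpace
variable {L : Type*} [MetricSpace L]
namespace SkorokhodAux

lemma isOpen_iff_skorokhod (s : Set (SkorokhodSpace L)) :
    IsOpen s ↔ ∀ x ∈ s, ∃ ε > 0, ∀ y, skorokhodDist x.1 y.1 < ε → y ∈ s := by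
  constructor
  · intro h
    change TopologicalSpace.GenerateOpen _ s at h
    induction h with
    | basic u hu =>
      obtain ⟨ω, ε, hε, rfl⟩ := hu
      intro x hx
      refine ⟨ε - skorokhodDist ω.1 x.1, by simpa using hx, fun y hy => ?_⟩
      have := skorokhodDist_triangle ω.1 x.1 y.1
      simp only [Set.mem_setOf_eq] at hx ⊢
      linarith
    | univ => exact fun x _ => ⟨1, one_pos, fun y _ => trivial⟩
    | inter u v _ _ ihu ihv =>
      intro x hx
      obtain ⟨ε₁, hε₁, h₁⟩ := ihu x hx.1
      obtain ⟨ε₂, hε₂, h₂⟩ := ihv x hx.2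
      exact ⟨min ε₁ ε₂, lt_min hε₁ hε₂, fun y hy =>
        ⟨h₁ y (hy.trans_le (min_le_left _ _)), h₂ y (hy.trans_le (min_le_right _ _))⟩⟩
    | sUnion S _ ih =>
      intro x hx
      obtain ⟨u, hu, hxu⟩ := hx
      obtain ⟨ε, hε, h⟩ := ih u hu x hxu
      exact ⟨ε, hε, fun y hy => ⟨u, hu, h y hy⟩⟩
  · intro h
    have hs : s = ⋃ (x : SkorokhodSpace L) (hx : x ∈ s),
        {y : SkorokhodSpace L | skorokhodDist x.1 y.1 < (h x hx).choose} := by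
      ext y
      simp only [Set.mem_iUnion, Set.mem_setOf_eq]
      constructor
      · intro hy
        exact ⟨y, hy, by rw [skorokhodDist_self]; exact (h y hy).choose_spec.1⟩
      · rintro ⟨x, hx, hd⟩
        exact (h x hx).choose_spec.2 y hd
    rw [hs]
    refine isOpen_iUnion fun x => isOpen_iUnion fun hx => ?_
    exact TopologicalSpace.isOpen_generateFrom_of_mem
      ⟨x, (h x hx).choose, (h x hx).choose_spec.1, rfl⟩

noncomputable instance : PseudoMetricSpace (SkorokhodSpace L) :=
  PseudoMetricSpace.ofDistTopology (fun x y => skorokhodDist x.1 y.1)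
    (fun x => skorokhodDist_self x.1) (fun x y => skorokhodDist_comm x.1 y.1)
    (fun x y z => skorokhodDist_triangle x.1 y.1 z.1) isOpen_iff_skorokhod

lemma dist_def (x y : SkorokhodSpace L) : dist x y = skorokhodDist x.1 y.1 := rfl

instance : BorelSpace (SkorokhodSpace L) := ⟨rfl⟩

example : HasOuterApproxClosed (SkorokhodSpace L) := inferInstance
example : OpensMeasurableSpace (SkorokhodSpace L) := inferInstance

end SkorokhodAux
end Topo


namespace SkorokhodAux

variable {L : Type*} [MetricSpace L]

lemma le_modCont (φ : UI → L) {δ : ℝ} {s t : UI} (h : |(s.1 : ℝ) - (t.1 : ℝ)| < δ) :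
    edist (φ s) (φ t) ≤ modCont φ δ :=
  le_iSup_of_le s (le_iSup_of_le t (le_iSup_of_le h le_rfl))

lemma modCont_le (φ : UI → L) (δ : ℝ) {c : ℝ≥0∞}
    (h : ∀ s t : UI, |(s.1 : ℝ) - (t.1 : ℝ)| < δ → edist (φ s) (φ t) ≤ c) :
    modCont φ δ ≤ c :=
  iSup_le fun s => iSup_le fun t => iSup_le fun hst => h s t hst

lemma modCont_mono (φ : UI → L) {δ δ' : ℝ} (h : δ ≤ δ') : modCont φ δ ≤ modCont φ δ' :=
  modCont_le φ δ fun _ _ hst => le_modCont φ (hst.trans_le h)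

lemma modCont_of_close {x y : SkorokhodSpace L} {γ δ ε : ℝ} (hγ : 0 < γ) (hγ1 : γ < 1)
    (hd : skorokhodDist x.1 y.1 < γ) (hm : ENNReal.ofReal ε < modCont y.1 δ) :
    ENNReal.ofReal (ε - 2*γ) ≤ modCont x.1 (δ + 2*γ) := by
  rw [skorokhodDist_eq] at hd
  obtain ⟨e, he⟩ := exists_lt_of_ciInf_lt hd
  have htime : ∀ t : UI, |((e t).1 : ℝ) - (t.1 : ℝ)| < γ := fun t =>
    ((le_ciSup (bddAbove_time e) t).trans (le_max_left _ _)).trans_lt he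
  have hdist : ∀ t : UI, dist (x.1 (e t)) (y.1 t) < γ := by
    intro t
    have h1 : min (dist (x.1 (e t)) (y.1 t)) 1 < γ :=
      ((le_ciSup (bddAbove_dist x.1 y.1 e) t).trans (le_max_right _ _)).trans_lt he
    rcases min_lt_iff.mp h1 with h | h
    · exact h
    · exact absurd h (not_lt.2 hγ1.le)
  have key : modCont y.1 δ ≤ modCont x.1 (δ + 2*γ) + ENNReal.ofReal (2*γ) := by
    refine modCont_le _ _ fun s t hst => ?_
    have hmid : edist (x.1 (e s)) (x.1 (e t)) ≤ modCont x.1 (δ + 2*γ) := by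
      refine le_modCont x.1 ?_
      have h1 : |((e s).1 : ℝ) - ((e t).1 : ℝ)| ≤
          |((e s).1 : ℝ) - (s.1 : ℝ)| + |(s.1 : ℝ) - (t.1 : ℝ)| + |(t.1 : ℝ) - ((e t).1 : ℝ)| := by
        calc |((e s).1 : ℝ) - ((e t).1 : ℝ)|
            ≤ |((e s).1 : ℝ) - (s.1 : ℝ)| + |(s.1 : ℝ) - ((e t).1 : ℝ)| := abs_sub_le _ _ _
          _ ≤ |((e s).1 : ℝ) - (s.1 : ℝ)| +
              (|(s.1 : ℝ) - (t.1 : ℝ)| + |(t.1 : ℝ) - ((e t).1 : ℝ)|) := by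
              gcongr; exact abs_sub_le _ _ _
          _ = _ := by ring
      have h2 := htime s
      have h3 := htime t
      rw [abs_sub_comm] at h3
      linarith
    have hside1 : edist (y.1 s) (x.1 (e s)) ≤ ENNReal.ofReal γ := by
      rw [edist_dist, dist_comm]
      exact ENNReal.ofReal_le_ofReal (hdist s).le
    have hside2 : edist (x.1 (e t)) (y.1 t) ≤ ENNReal.ofReal γ := by
      rw [edist_dist]
      exact ENNReal.ofReal_le_ofReal (hdist t).le
    calc edist (y.1 s) (y.1 t)
        ≤ edist (y.1 s) (x.1 (e s)) + edist (x.1 (e s)) (x.1 (e t)) + edist (x.1 (e t)) (y.1 t) :=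
          edist_triangle4 _ _ _ _
      _ ≤ ENNReal.ofReal γ + modCont x.1 (δ + 2*γ) + ENNReal.ofReal γ := by gcongr
      _ = modCont x.1 (δ + 2*γ) + ENNReal.ofReal (2*γ) := by
          rw [two_mul, ENNReal.ofReal_add hγ.le hγ.le]; ring
  have h4 : ENNReal.ofReal ε ≤ modCont x.1 (δ + 2*γ) + ENNReal.ofReal (2*γ) :=
    (hm.trans_le key).le
  rw [ENNReal.ofReal_sub _ (by linarith : (0:ℝ) ≤ 2*γ)]
  exact tsub_le_iff_right.mpr h4

lemma exists_modCont_le {φ : UI → L} (hφ : Continuous φ) {r : ℝ} (hr : 0 < r) :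
    ∃ δ > 0, modCont φ δ ≤ ENNReal.ofReal r := by
  have h := CompactSpace.uniformContinuous_of_continuous hφ
  obtain ⟨δ, hδ, hδ'⟩ := Metric.uniformContinuous_iff.mp h r hr
  refine ⟨δ, hδ, modCont_le _ _ fun s t hst => ?_⟩
  have hst' : dist s t < δ := by rwa [Subtype.dist_eq, Real.dist_eq]
  rw [edist_dist]
  exact ENNReal.ofReal_le_ofReal (hδ' hst').le

end SkorokhodAux

open SkorokhodAux

/-- **Lemma (moduli of continuity under weak convergence).**  If the finite measures
`ℙ_k` on `D_L[0,1]` converge weakly to a finite measure `ℙ₀` concentrated on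
`C_L[0,1]`, then for every `ε > 0`, `limsup_k ℙ_k{ω : w(ω,δ) > ε} → 0` as `δ ↓ 0`. -/
theorem limsup_modCont_tendsto_zero
    {L : Type*} [MetricSpace L] [TopologicalSpace.SeparableSpace L]
    (P : ℕ → Measure (SkorokhodSpace L)) (hP_fin : ∀ k, IsFiniteMeasure (P k))
    (P0 : Measure (SkorokhodSpace L)) (hP0_fin : IsFiniteMeasure P0)
    (hP0_cont : P0 {ω : SkorokhodSpace L | ¬ Continuous ω.1} = 0)
    (hweak : ∀ F : BoundedContinuousFunction (SkorokhodSpace L) ℝ,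
      Tendsto (fun k => ∫ ω, F ω ∂(P k)) atTop (𝓝 (∫ ω, F ω ∂P0)))
    (ε : ℝ) (hε : 0 < ε) :
    Tendsto
      (fun δ : ℝ =>
        Filter.limsup (fun k => P k {ω : SkorokhodSpace L | ENNReal.ofReal ε < modCont ω.1 δ})
          atTop)
      (𝓝[>] (0 : ℝ)) (𝓝 0) := by
  classical
  letI := hP0_fin
  set A : ℝ → Set (SkorokhodSpace L) :=
    fun δ => {ω : SkorokhodSpace L | ENNReal.ofReal ε < modCont ω.1 δ} with hA
  set G : ℕ → Set (SkorokhodSpace L) := fun n => closure (A (1/((n:ℝ)+1))) with hG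
  have hGclosed : ∀ n, IsClosed (G n) := fun n => isClosed_closure
  have hAmono : ∀ {δ δ' : ℝ}, δ ≤ δ' → A δ ⊆ A δ' := fun {δ δ'} h x hx =>
    hx.trans_le (modCont_mono x.1 h)
  have hGanti : Antitone G := by
    intro n m hnm
    refine closure_mono (hAmono ?_)
    have h1 : (0:ℝ) < (n:ℝ) + 1 := by positivity
    have h2 : ((n:ℝ) + 1) ≤ ((m:ℝ) + 1) := by exact_mod_cast Nat.succ_le_succ hnm
    exact one_div_le_one_div_of_le h1 h2
  have hInter : (⋂ n, G n) ⊆ {ω : SkorokhodSpace L | ¬ Continuous ω.1} := by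
    intro x hx
    simp only [Set.mem_iInter] at hx
    simp only [Set.mem_setOf_eq]
    intro hcont
    obtain ⟨δ', hδ', hmc⟩ := exists_modCont_le hcont (show (0:ℝ) < ε/4 by linarith)
    obtain ⟨n, hn⟩ := exists_nat_one_div_lt (show (0:ℝ) < δ'/2 by linarith)
    set γ : ℝ := min (δ'/4) (min (ε/8) (1/2)) with hγdef
    have hγpos : 0 < γ := lt_min (by linarith) (lt_min (by linarith) (by norm_num))
    have hγ1 : γ < 1 :=
      lt_of_le_of_lt ((min_le_right _ _).trans (min_le_right _ _)) (by norm_num)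
    have hxG := hx n
    rw [hG, Metric.mem_closure_iff] at hxG
    obtain ⟨y, hyA, hdxy⟩ := hxG γ hγpos
    rw [dist_def] at hdxy
    have hle := modCont_of_close hγpos hγ1 hdxy hyA
    have hδle : 1/((n:ℝ)+1) + 2*γ ≤ δ' := by
      have h1 : γ ≤ δ'/4 := min_le_left _ _
      linarith
    have hfin : ENNReal.ofReal (ε - 2*γ) ≤ ENNReal.ofReal (ε/4) :=
      hle.trans ((modCont_mono x.1 hδle).trans hmc)
    have hcon : ε - 2*γ ≤ ε/4 := by
      rwa [ENNReal.ofReal_le_ofReal_iff (by linarith)] at hfin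
    have hγε : γ ≤ ε/8 := (min_le_right _ _).trans (min_le_left _ _)
    linarith
  have hP0inter : P0 (⋂ n, G n) = 0 :=
    le_antisymm ((measure_mono hInter).trans hP0_cont.le) (zero_le)
  have htends : Tendsto (fun n => P0 (G n)) atTop (𝓝 0) := by
    have h := MeasureTheory.tendsto_measure_iInter_atTop (μ := P0)
      (fun n => ((hGclosed n).measurableSet).nullMeasurableSet) hGanti
      ⟨0, measure_ne_top P0 _⟩
    rwa [hP0inter] at h
  set μs : ℕ → FiniteMeasure (SkorokhodSpace L) := fun k => ⟨P k, hP_fin k⟩ with hμs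
  set μ0 : FiniteMeasure (SkorokhodSpace L) := ⟨P0, hP0_fin⟩ with hμ0
  have hconv : Tendsto μs atTop (𝓝 μ0) :=
    FiniteMeasure.tendsto_iff_forall_integral_tendsto.mpr hweak
  have hport : ∀ n, Filter.limsup (fun k => P k (G n)) atTop ≤ P0 (G n) := fun n =>
    FiniteMeasure.limsup_measure_closed_le_of_tendsto hconv (hGclosed n)
  rw [ENNReal.tendsto_nhds_zero]
  intro η hη
  obtain ⟨n, hn⟩ := (htends.eventually_lt_const hη).exists
  have hmem : Set.Ioo (0:ℝ) (1/((n:ℝ)+1)) ∈ 𝓝[>] (0:ℝ) :=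
    Ioo_mem_nhdsGT_of_mem ⟨le_refl 0, by positivity⟩
  filter_upwards [hmem] with δ hδ
  calc Filter.limsup (fun k => P k (A δ)) atTop
      ≤ Filter.limsup (fun k => P k (G n)) atTop :=
        Filter.limsup_le_limsup (Eventually.of_forall fun k =>
          measure_mono ((hAmono hδ.2.le).trans subset_closure))
    _ ≤ P0 (G n) := hport n
    _ ≤ η := hn.le
end

section
/- Let f ∈ ℐ⁰, i.e. f is a finite real linear combination of monomials p_k with d(k) ≥ 0, and let f = f₀ + f_{1/2} + f₁ + … be its decomposition into homogeneous components of degrees 0, 1/2, 1, …. Then lim_{t→0} 𝒢_t(f) exists and, as t → 0, 𝒢_t(f) = 𝒢_t(Q f₀) + 𝒢_t(Q f₁) + o(t), where Q is the projection onto the subalgebra generated by monomials p_k with all exponents k₁, …, k_n even. -/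
/-!
STATEMENT 9: Short-time asymptotics of Gaussian integrals of space-time polynomials.
An element `f` of the algebra `𝓛` generated by the monomials
`p_k(t,ξ) = t^{k₀} ξ₁^{k₁} ⋯ ξ_n^{k_n}` is represented by its finitely supported
coefficient function `c : (ℤ × (Fin n → ℕ)) →₀ ℝ`.  The degree is
`d(k) = k₀ + (k₁ + ⋯ + k_n)/2`; `f ∈ ℐ⁰` iff all monomials in its support have
`d(k) ≥ 0`.  `Q` is the projection onto the subalgebra generated by monomials with
all spatial exponents even, and `f_s` (`homogComp c s`) is the homogeneous component
of degree `s`.  Then `lim_{t→0} 𝒢_t(f)` exists and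
`𝒢_t(f) = 𝒢_t(Q f₀) + 𝒢_t(Q f₁) + o(t)` as `t → 0`.
-/

open Filter Topology Classical

/-- Multi-indices `k = (k₀, (k₁,…,k_n)) ∈ ℤ × ℕ₀ⁿ` of space-time monomials. -/
abbrev MIdx (n : ℕ) := ℤ × (Fin n → ℕ)

/-- The degree `d(k) = k₀ + (k₁ + ⋯ + k_n)/2`. -/
noncomputable def dDeg {n : ℕ} (k : MIdx n) : ℝ := (k.1 : ℝ) + (∑ i, (k.2 i : ℝ)) / 2

/-- The monomial `p_k(t,ξ) = t^{k₀} ξ₁^{k₁} ⋯ ξ_n^{k_n}`. -/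
noncomputable def monEval {n : ℕ} (k : MIdx n) (t : ℝ) (ξ : Fin n → ℝ) : ℝ :=
  t ^ k.1 * ∏ i, ξ i ^ k.2 i

/-- Evaluation of an element of `𝓛` given by its coefficients. -/
noncomputable def polyEval {n : ℕ} (c : MIdx n →₀ ℝ) (t : ℝ) (ξ : Fin n → ℝ) : ℝ :=
  ∑ k ∈ c.support, c k * monEval k t ξ

/-- The Gaussian functional `𝒢_t(F) = ∫_{ℝⁿ} (2πt)^{-n/2} e^{-|ξ|²/(2t)} F(t,ξ) dξ`. -/
noncomputable def gaussInt {n : ℕ} (F : ℝ → (Fin n → ℝ) → ℝ) (t : ℝ) : ℝ :=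
  ∫ ξ : Fin n → ℝ,
    (2 * Real.pi * t) ^ (-(n : ℝ) / 2) * Real.exp (-(∑ i, ξ i ^ 2) / (2 * t)) * F t ξ

/-- The homogeneous component of degree `s` of an element of `𝓛`. -/
noncomputable def homogComp {n : ℕ} (c : MIdx n →₀ ℝ) (s : ℝ) : MIdx n →₀ ℝ :=
  c.filter (fun k => dDeg k = s)

/-- The projection `Q` onto the subalgebra generated by monomials `p_k` with
`(k₁,…,k_n) ∈ (2ℕ₀)ⁿ`. -/
noncomputable def evenProj {n : ℕ} (c : MIdx n →₀ ℝ) : MIdx n →₀ ℝ :=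
  c.filter (fun k => ∀ i, Even (k.2 i))

/-- standard (unnormalised) gaussian moment -/
noncomputable def gJ (m : ℕ) : ℝ := ∫ y : ℝ, y ^ m * Real.exp (-y ^ 2 / 2)

noncomputable def gC {n : ℕ} (k : MIdx n) : ℝ :=
  ∏ i, ((2 * Real.pi) ^ (-(1 : ℝ) / 2) * gJ (k.2 i))

lemma integ_pow_gauss (m : ℕ) {t : ℝ} (ht : 0 < t) :
    MeasureTheory.Integrable fun x : ℝ => x ^ m * Real.exp (-x ^ 2 / (2 * t)) := by
  have h := integrable_rpow_mul_exp_neg_mul_sq (b := (2 * t)⁻¹) (by positivity)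
    (s := (m : ℝ)) (lt_of_lt_of_le neg_one_lt_zero (Nat.cast_nonneg m))
  have he : (fun x : ℝ => x ^ (m : ℝ) * Real.exp (-(2 * t)⁻¹ * x ^ 2))
      = fun x : ℝ => x ^ m * Real.exp (-x ^ 2 / (2 * t)) := by
    funext x; rw [Real.rpow_natCast]; congr 1; congr 1; ring_nf
  rwa [he] at h

lemma gJ_odd {m : ℕ} (hm : Odd m) : gJ m = 0 := by
  have h := MeasureTheory.integral_neg_eq_self
    (fun y : ℝ => y ^ m * Real.exp (-y ^ 2 / 2)) MeasureTheory.volume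
  simp only [hm.neg_pow, neg_sq, neg_mul, MeasureTheory.integral_neg] at h
  have : gJ m = -gJ m := h.symm
  linarith

lemma oneDim (m : ℕ) {t : ℝ} (ht : 0 < t) :
    (∫ x : ℝ, x ^ m * Real.exp (-x ^ 2 / (2 * t))) = t ^ (((m : ℝ) + 1) / 2) * gJ m := by
  have hs : 0 < Real.sqrt t := Real.sqrt_pos.mpr ht
  have h := MeasureTheory.Measure.integral_comp_mul_left
    (fun x : ℝ => x ^ m * Real.exp (-x ^ 2 / (2 * t))) (Real.sqrt t)
  have hsq : ∀ x : ℝ, (Real.sqrt t * x) ^ 2 = t * x ^ 2 := fun x => by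
    rw [mul_pow, Real.sq_sqrt ht.le]
  have harg : ∀ x : ℝ, -(Real.sqrt t * x) ^ 2 / (2 * t) = -x ^ 2 / 2 := fun x => by
    rw [hsq]; field_simp
  simp only [harg] at h
  simp only [mul_pow] at h
  rw [abs_of_pos (inv_pos.mpr hs), smul_eq_mul] at h
  -- h : ∫ x, √t^m * x^m * exp(-x^2/2) = (√t)⁻¹ * ∫ ...
  have h2 : Real.sqrt t ^ m * gJ m = (Real.sqrt t)⁻¹ * ∫ x : ℝ, x ^ m * Real.exp (-x ^ 2 / (2*t)) := by
    rw [← h, gJ, ← MeasureTheory.integral_const_mul]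
    congr 1; funext x; ring
  have h3 : (∫ x : ℝ, x ^ m * Real.exp (-x ^ 2 / (2*t))) = Real.sqrt t ^ (m+1) * gJ m := by
    have := congrArg (fun z => Real.sqrt t * z) h2
    simp only [← mul_assoc, mul_inv_cancel₀ hs.ne', one_mul] at this
    rw [← this]; ring
  rw [h3, Real.sqrt_eq_rpow, ← Real.rpow_natCast (t ^ (1/(2:ℝ))) (m+1),
    ← Real.rpow_mul ht.le]
  congr 1
  push_cast; ring

lemma prod_form {n : ℕ} (k : Fin n → ℕ) (t : ℝ) (ξ : Fin n → ℝ) :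
    Real.exp (-(∑ i, ξ i ^ 2) / (2 * t)) * ∏ i, ξ i ^ k i
      = ∏ i, (ξ i ^ k i * Real.exp (-ξ i ^ 2 / (2 * t))) := by
  rw [Finset.prod_mul_distrib, ← Real.exp_sum, mul_comm]
  congr 2
  rw [← Finset.sum_div, ← Finset.sum_neg_distrib]

lemma integ_mon {n : ℕ} (k : Fin n → ℕ) {t : ℝ} (ht : 0 < t) :
    MeasureTheory.Integrable fun ξ : Fin n → ℝ =>
      Real.exp (-(∑ i, ξ i ^ 2) / (2 * t)) * ∏ i, ξ i ^ k i := by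
  have := MeasureTheory.Integrable.fintype_prod_dep
    (f := fun (i : Fin n) (x : ℝ) => x ^ k i * Real.exp (-x ^ 2 / (2 * t)))
    (fun i => integ_pow_gauss (k i) ht)
  simpa [prod_form k t, ← MeasureTheory.volume_pi] using this

lemma gauss_mon {n : ℕ} (k : MIdx n) {t : ℝ} (ht : 0 < t) :
    gaussInt (monEval k) t = gC k * t ^ dDeg k := by
  have hπ : (0:ℝ) < 2 * Real.pi := by positivity
  unfold gaussInt monEval
  have hrw : ∀ ξ : Fin n → ℝ,
      (2 * Real.pi * t) ^ (-(n : ℝ) / 2) * Real.exp (-(∑ i, ξ i ^ 2) / (2 * t))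
        * (t ^ k.1 * ∏ i, ξ i ^ k.2 i)
      = ((2 * Real.pi * t) ^ (-(n : ℝ) / 2) * t ^ k.1)
        * ∏ i, (ξ i ^ k.2 i * Real.exp (-ξ i ^ 2 / (2 * t))) := by
    intro ξ; rw [← prod_form k.2 t ξ]; ring
  simp only [hrw]
  rw [MeasureTheory.integral_const_mul, MeasureTheory.volume_pi,
    MeasureTheory.integral_fintype_prod_eq_prod (𝕜 := ℝ) (ι := Fin n)
      (f := fun i (x : ℝ) => x ^ k.2 i * Real.exp (-x ^ 2 / (2 * t)))]
  simp only [oneDim _ ht]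
  rw [Finset.prod_mul_distrib, ← Real.rpow_sum_of_pos ht]
  -- now pure algebra in rpow
  unfold gC
  rw [Finset.prod_mul_distrib, Finset.prod_const, Finset.card_univ, Fintype.card_fin,
    ← Real.rpow_natCast ((2 * Real.pi) ^ (-(1:ℝ)/2)) n, ← Real.rpow_mul hπ.le,
    Real.mul_rpow hπ.le ht.le, ← Real.rpow_intCast t k.1]
  have hexp : ∑ i, (((k.2 i : ℝ)) + 1) / 2 = (∑ i, (k.2 i : ℝ)) / 2 + n / 2 := by
    rw [← Finset.sum_div, Finset.sum_add_distrib, Finset.sum_const, Finset.card_univ,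
      Fintype.card_fin, nsmul_eq_mul, mul_one, add_div]
  rw [hexp]
  have hcomb : t ^ (-(n:ℝ)/2) * t ^ ((k.1:ℝ)) * t ^ ((∑ i, (k.2 i : ℝ)) / 2 + (n:ℝ) / 2)
      = t ^ dDeg k := by
    rw [← Real.rpow_add ht, ← Real.rpow_add ht]
    congr 1
    unfold dDeg; ring
  have hpi2 : (-(1:ℝ)/2) * (n:ℝ) = -(n:ℝ)/2 := by ring
  rw [hpi2]
  calc (2 * Real.pi) ^ (-(n:ℝ)/2) * t ^ (-(n:ℝ)/2) * t ^ ((k.1:ℝ))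
        * (t ^ ((∑ i, (k.2 i : ℝ)) / 2 + (n:ℝ)/2) * ∏ i, gJ (k.2 i))
      = ((2 * Real.pi) ^ (-(n:ℝ)/2) * ∏ i, gJ (k.2 i))
        * (t ^ (-(n:ℝ)/2) * t ^ ((k.1:ℝ)) * t ^ ((∑ i, (k.2 i : ℝ)) / 2 + (n:ℝ)/2)) := by ring
    _ = ((2 * Real.pi) ^ (-(n:ℝ)/2) * ∏ i, gJ (k.2 i)) * t ^ dDeg k := by rw [hcomb]

lemma gauss_poly {n : ℕ} (c : MIdx n →₀ ℝ) {t : ℝ} (ht : 0 < t) :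
    gaussInt (polyEval c) t = ∑ k ∈ c.support, c k * gC k * t ^ dDeg k := by
  unfold gaussInt polyEval
  have hsplit : ∀ ξ : Fin n → ℝ,
      (2 * Real.pi * t) ^ (-(n : ℝ) / 2) * Real.exp (-(∑ i, ξ i ^ 2) / (2 * t))
        * (∑ k ∈ c.support, c k * monEval k t ξ)
      = ∑ k ∈ c.support, c k *
          ((2 * Real.pi * t) ^ (-(n : ℝ) / 2) * Real.exp (-(∑ i, ξ i ^ 2) / (2 * t))
            * monEval k t ξ) := by
    intro ξ; rw [Finset.mul_sum]; exact Finset.sum_congr rfl fun k _ => by ring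
  simp only [hsplit]
  rw [MeasureTheory.integral_finset_sum]
  · refine Finset.sum_congr rfl fun k _ => ?_
    rw [MeasureTheory.integral_const_mul]
    have := gauss_mon k ht
    unfold gaussInt at this
    rw [this, mul_assoc]
  · intro k _
    apply MeasureTheory.Integrable.const_mul
    have hi := ((integ_mon k.2 ht).const_mul ((2 * Real.pi * t) ^ (-(n : ℝ) / 2) * t ^ k.1))
    apply hi.congr
    filter_upwards with ξ
    unfold monEval; ring

lemma gauss_filter {n : ℕ} (c : MIdx n →₀ ℝ) (p : MIdx n → Prop) [DecidablePred p] {t : ℝ}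
    (ht : 0 < t) :
    gaussInt (polyEval (c.filter p)) t
      = ∑ k ∈ c.support.filter p, c k * gC k * t ^ dDeg k := by
  rw [gauss_poly _ ht, Finsupp.support_filter]
  exact Finset.sum_congr rfl fun k hk => by
    rw [Finsupp.filter_apply_pos _ _ (Finset.mem_filter.mp hk).2]


lemma rpow_tendsto_zero {d : ℝ} (hd : 0 < d) :
    Tendsto (fun t : ℝ => t ^ d) (𝓝[>] (0:ℝ)) (𝓝 0) := by
  have hcont : ContinuousAt (fun t : ℝ => t ^ d) 0 :=
    Real.continuousAt_rpow_const 0 _ (Or.inr hd.le)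
  have h := hcont.tendsto.mono_left (nhdsWithin_le_nhds (s := Set.Ioi (0:ℝ)))
  simpa [Real.zero_rpow hd.ne'] using h

lemma rpow_isLittleO {d : ℝ} (hd : 2 ≤ d) :
    (fun t : ℝ => t ^ d) =o[𝓝[>] (0:ℝ)] (fun t : ℝ => t) := by
  rw [Asymptotics.isLittleO_iff_tendsto'
    (by filter_upwards [self_mem_nhdsWithin] with t ht h; exact absurd h (ne_of_gt ht))]
  have heq : (fun t : ℝ => t ^ (d - 1)) =ᶠ[𝓝[>] (0:ℝ)] fun t => t ^ d / t := by
    filter_upwards [self_mem_nhdsWithin] with t ht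
    rw [Real.rpow_sub ht, Real.rpow_one]
  exact (rpow_tendsto_zero (by linarith)).congr' heq


/-- **Short time asymptotics of Gaussian integrals** (Proposition `wickalg`).
Let `f ∈ ℐ⁰` (all monomials in the support have degree `≥ 0`), with homogeneous
decomposition `f = f₀ + f_{1/2} + f₁ + …`.  Then `lim_{t→0} 𝒢_t(f)` exists and
`𝒢_t(f) = 𝒢_t(Q f₀) + 𝒢_t(Q f₁) + o(t)` as `t → 0`. -/
theorem gaussInt_shorttime_asymptotics {n : ℕ} (c : MIdx n →₀ ℝ)
    (hc : ∀ k ∈ c.support, 0 ≤ dDeg k) :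
    (∃ l : ℝ, Tendsto (gaussInt (polyEval c)) (𝓝[>] (0 : ℝ)) (𝓝 l)) ∧
    (fun t => gaussInt (polyEval c) t
        - gaussInt (polyEval (evenProj (homogComp c 0))) t
        - gaussInt (polyEval (evenProj (homogComp c 1))) t)
      =o[𝓝[>] (0 : ℝ)] (fun t => t) := by
  classical
  set S := c.support with hS
  -- filtered evaluations
  have hG : ∀ (s : ℝ) {t : ℝ}, 0 < t → gaussInt (polyEval (evenProj (homogComp c s))) t
      = ∑ k ∈ S, (if dDeg k = s ∧ (∀ i, Even (k.2 i)) then c k * gC k * t ^ dDeg k else 0) := by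
    intro s t ht
    rw [evenProj, homogComp, gauss_filter _ _ ht, Finsupp.support_filter, Finset.filter_filter]
    rw [Finset.sum_congr rfl (fun k hk => by
      rw [Finsupp.filter_apply_pos (fun k => dDeg k = s) c (Finset.mem_filter.mp hk).2.1])]
    exact (Finset.sum_filter _ _)
  constructor
  · refine ⟨∑ k ∈ S, (if dDeg k = 0 then c k * gC k else 0), ?_⟩
    have hlim : ∀ k ∈ S, Tendsto (fun t : ℝ => c k * gC k * t ^ dDeg k) (𝓝[>] (0:ℝ))
        (𝓝 (if dDeg k = 0 then c k * gC k else 0)) := by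
      intro k hk
      by_cases h0 : dDeg k = 0
      · simp only [h0, Real.rpow_zero, mul_one, if_pos]
        exact tendsto_const_nhds
      · rw [if_neg h0]
        have hd : 0 < dDeg k := lt_of_le_of_ne (hc k hk) (Ne.symm h0)
        simpa using (rpow_tendsto_zero hd).const_mul (c k * gC k)
    apply Tendsto.congr' ?_ (tendsto_finset_sum _ hlim)
    filter_upwards [self_mem_nhdsWithin] with t ht
    exact (gauss_poly c ht).symm
  · have hD : (fun t => gaussInt (polyEval c) t
        - gaussInt (polyEval (evenProj (homogComp c 0))) t
        - gaussInt (polyEval (evenProj (homogComp c 1))) t)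
        =ᶠ[𝓝[>] (0:ℝ)]
        (fun t => ∑ k ∈ S, (c k * gC k * t ^ dDeg k
          - (if dDeg k = 0 ∧ (∀ i, Even (k.2 i)) then c k * gC k * t ^ dDeg k else 0)
          - (if dDeg k = 1 ∧ (∀ i, Even (k.2 i)) then c k * gC k * t ^ dDeg k else 0))) := by
      filter_upwards [self_mem_nhdsWithin] with t ht
      rw [gauss_poly c ht, hG 0 ht, hG 1 ht, ← Finset.sum_sub_distrib, ← Finset.sum_sub_distrib]
    refine hD.trans_isLittleO (Asymptotics.IsLittleO.fun_sum ?_)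
    intro k hk
    by_cases heven : ∀ i, Even (k.2 i)
    · -- integer degree
      have hsum : Even (∑ i, k.2 i) :=
        ⟨∑ i, (heven i).choose, by
          rw [← Finset.sum_add_distrib]
          exact Finset.sum_congr rfl fun i _ => (heven i).choose_spec⟩
      obtain ⟨m, hm⟩ := hsum
      have hdz : dDeg k = ((k.1 + (m : ℤ) : ℤ) : ℝ) := by
        unfold dDeg
        have hcast : (∑ i, (k.2 i : ℝ)) = ((∑ i, k.2 i : ℕ) : ℝ) := by push_cast; rfl
        rw [hcast, hm]; push_cast; ring
      by_cases h0 : dDeg k = 0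
      · have hfun : (fun t : ℝ => c k * gC k * t ^ dDeg k
            - (if dDeg k = 0 ∧ (∀ i, Even (k.2 i)) then c k * gC k * t ^ dDeg k else 0)
            - (if dDeg k = 1 ∧ (∀ i, Even (k.2 i)) then c k * gC k * t ^ dDeg k else 0))
            = fun _ => (0:ℝ) := by
          funext t
          rw [if_pos ⟨h0, heven⟩, if_neg (by rintro ⟨h1, -⟩; rw [h0] at h1; norm_num at h1)]
          ring
        rw [hfun]; exact Asymptotics.isLittleO_zero _ _
      · by_cases h1 : dDeg k = 1
        · have hfun : (fun t : ℝ => c k * gC k * t ^ dDeg k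
              - (if dDeg k = 0 ∧ (∀ i, Even (k.2 i)) then c k * gC k * t ^ dDeg k else 0)
              - (if dDeg k = 1 ∧ (∀ i, Even (k.2 i)) then c k * gC k * t ^ dDeg k else 0))
              = fun _ => (0:ℝ) := by
            funext t
            rw [if_neg (by rintro ⟨h0', -⟩; exact h0 h0'), if_pos ⟨h1, heven⟩]
            ring
          rw [hfun]; exact Asymptotics.isLittleO_zero _ _
        · have hz0 : (0:ℤ) ≤ k.1 + (m:ℤ) := by
            have := hc k hk; rw [hdz] at this; exact_mod_cast this
          have hz1 : k.1 + (m:ℤ) ≠ 0 := fun h => h0 (by rw [hdz, h]; norm_num)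
          have hz2 : k.1 + (m:ℤ) ≠ 1 := fun h => h1 (by rw [hdz, h]; norm_num)
          have hd2 : (2:ℝ) ≤ dDeg k := by
            rw [hdz]; exact_mod_cast (by omega : (2:ℤ) ≤ k.1 + (m:ℤ))
          have hfun : (fun t : ℝ => c k * gC k * t ^ dDeg k
              - (if dDeg k = 0 ∧ (∀ i, Even (k.2 i)) then c k * gC k * t ^ dDeg k else 0)
              - (if dDeg k = 1 ∧ (∀ i, Even (k.2 i)) then c k * gC k * t ^ dDeg k else 0))
              = fun t : ℝ => c k * gC k * t ^ dDeg k := by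
            funext t
            rw [if_neg (by rintro ⟨h0', -⟩; exact h0 h0'),
              if_neg (by rintro ⟨h1', -⟩; exact h1 h1')]
            ring
          rw [hfun]
          exact (rpow_isLittleO hd2).const_mul_left _
    · push_neg at heven
      obtain ⟨i, hi⟩ := heven
      have hgC : gC k = 0 := by
        unfold gC
        apply Finset.prod_eq_zero (Finset.mem_univ i)
        rw [gJ_odd (Nat.not_even_iff_odd.mp hi), mul_zero]
      have hfun : (fun t : ℝ => c k * gC k * t ^ dDeg k
          - (if dDeg k = 0 ∧ (∀ i, Even (k.2 i)) then c k * gC k * t ^ dDeg k else 0)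
          - (if dDeg k = 1 ∧ (∀ i, Even (k.2 i)) then c k * gC k * t ^ dDeg k else 0))
          = fun _ => (0:ℝ) := by
        funext t; simp [hgC]
      rw [hfun]; exact Asymptotics.isLittleO_zero _ _
end

section
/- Let f, h ∈ 𝓛 with homogeneous components f = f₀ + f_{1/2} + f₁ where f₀ ∈ ℝ is constant, and h = 1 + h₁ where h₁ is homogeneous of degree 1. Then, as t ↓ 0, 𝒢_t(f h)/𝒢_t(h) − 𝒢₀(f h)/𝒢₀(h) = 𝒢_t(f₁) + o(t), where 𝒢₀ denotes the limit of 𝒢_t as t → 0. -/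
/-!
STATEMENT 10: Quotients of Gaussian integrals (Corollary `bedg`).
Let `f, h ∈ 𝓛` with homogeneous components `f = f₀ + f_{1/2} + f₁`, where `f₀ ∈ ℝ`
is a constant (a multiple of the monomial `1`), and `h = 1 + h₁` with `h₁`
homogeneous of degree `1`.  Then, as `t ↓ 0`,
`𝒢_t(f h)/𝒢_t(h) − 𝒢₀(f h)/𝒢₀(h) = 𝒢_t(f₁) + o(t)`,
where `𝒢₀` denotes the limit of `𝒢_t` as `t → 0`.
-/

open Filter Topology Classical

open MeasureTheory Real

/-! ### Auxiliary machinery -/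

/-- Moments of the standard Gaussian measure on `ℝⁿ`. -/
noncomputable def stdM {n : ℕ} (v : Fin n → ℕ) : ℝ :=
  ∫ ξ : Fin n → ℝ, (2 * Real.pi) ^ (-(n : ℝ) / 2) * Real.exp (-(∑ i, ξ i ^ 2) / 2) * ∏ i, ξ i ^ v i

lemma int1D {b : ℝ} (hb : 0 < b) (m : ℕ) :
    Integrable (fun x : ℝ => Real.exp (-b * x ^ 2) * x ^ m) := by
  have h := integrable_rpow_mul_exp_neg_mul_sq hb (s := m)
    (by exact_mod_cast neg_lt_iff_pos_add.mpr (by positivity : (0:ℝ) < m + 1))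
  simp_rw [Real.rpow_natCast] at h
  exact h.congr (by filter_upwards with x using by ring)

lemma int1D' (m : ℕ) : Integrable (fun x : ℝ => Real.exp (-(x ^ 2) / 2) * x ^ m) := by
  have := int1D (b := 1/2) (by norm_num) m
  exact this.congr (by filter_upwards with x using by ring_nf)

lemma prod_split {n : ℕ} (v : Fin n → ℕ) (ξ : Fin n → ℝ) :
    Real.exp (-(∑ i, ξ i ^ 2) / 2) * ∏ i, ξ i ^ v i
      = ∏ i, (Real.exp (-(ξ i ^ 2) / 2) * ξ i ^ v i) := by
  rw [Finset.prod_mul_distrib, ← Real.exp_sum]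
  congr 2
  rw [← Finset.sum_neg_distrib, Finset.sum_div]

lemma intStd {n : ℕ} (v : Fin n → ℕ) :
    Integrable (fun ξ : Fin n → ℝ => Real.exp (-(∑ i, ξ i ^ 2) / 2) * ∏ i, ξ i ^ v i) := by
  simp_rw [prod_split]
  exact Integrable.fintype_prod fun i => int1D' (v i)

lemma stdM_eq_prod {n : ℕ} (v : Fin n → ℕ) :
    stdM v = (2 * Real.pi) ^ (-(n : ℝ) / 2)
      * ∏ i, ∫ x : ℝ, Real.exp (-(x ^ 2) / 2) * x ^ v i := by
  unfold stdM
  simp_rw [mul_assoc, integral_const_mul, prod_split]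
  rw [integral_fintype_prod_volume_eq_prod (f := fun i (x : ℝ) => Real.exp (-(x ^ 2) / 2) * x ^ v i)]

lemma mom1D_odd {m : ℕ} (hm : Odd m) : ∫ x : ℝ, Real.exp (-(x ^ 2) / 2) * x ^ m = 0 := by
  have h := integral_neg_eq_self (fun x : ℝ => Real.exp (-(x ^ 2) / 2) * x ^ m) volume
  have h2 : ∀ x : ℝ, Real.exp (-((-x) ^ 2) / 2) * (-x) ^ m
      = -(Real.exp (-(x ^ 2) / 2) * x ^ m) := by
    intro x; rw [hm.neg_pow, neg_sq]; ring
  simp_rw [h2, integral_neg] at h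
  linarith

lemma mom1D_zero : ∫ x : ℝ, Real.exp (-(x ^ 2) / 2) = Real.sqrt (2 * Real.pi) := by
  have h := integral_gaussian (1/2 : ℝ)
  simp_rw [show ∀ x : ℝ, -(1/2 : ℝ) * x ^ 2 = -(x^2)/2 by intro x; ring] at h
  rw [h]
  norm_num [mul_comm]

lemma stdM_odd {n : ℕ} {v : Fin n → ℕ} (j : Fin n) (hj : Odd (v j)) : stdM v = 0 := by
  rw [stdM_eq_prod, Finset.prod_eq_zero (Finset.mem_univ j) (mom1D_odd hj), mul_zero]

lemma stdM_zero {n : ℕ} : stdM (0 : Fin n → ℕ) = 1 := by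
  rw [stdM_eq_prod]
  simp only [Pi.zero_apply, pow_zero, mul_one, mom1D_zero, Finset.prod_const,
    Finset.card_univ, Fintype.card_fin]
  have h2π : (0:ℝ) ≤ 2 * Real.pi := by positivity
  rw [show Real.sqrt (2*Real.pi) = (2*Real.pi) ^ ((1:ℝ)/2) from Real.sqrt_eq_rpow _,
    ← Real.rpow_natCast ((2*Real.pi) ^ ((1:ℝ)/2)) n, ← Real.rpow_mul h2π,
    ← Real.rpow_add (by positivity)]
  rw [show (-(n:ℝ)/2 + 1/2*(n:ℝ)) = 0 by ring, Real.rpow_zero]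

lemma stdM_eq {n : ℕ} (v : Fin n → ℕ) :
    stdM v = (2 * Real.pi) ^ (-(n : ℝ) / 2)
      * ∫ ξ : Fin n → ℝ, Real.exp (-(∑ i, ξ i ^ 2) / 2) * ∏ i, ξ i ^ v i := by
  unfold stdM
  simp_rw [mul_assoc]
  rw [integral_const_mul]

lemma gauss_mon_s9 {n : ℕ} (k : MIdx n) {t : ℝ} (ht : 0 < t) :
    Integrable (fun ξ : Fin n → ℝ =>
       (2 * Real.pi * t) ^ (-(n : ℝ) / 2) * Real.exp (-(∑ i, ξ i ^ 2) / (2 * t)) * monEval k t ξ) ∧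
    (∫ ξ : Fin n → ℝ,
       (2 * Real.pi * t) ^ (-(n : ℝ) / 2) * Real.exp (-(∑ i, ξ i ^ 2) / (2 * t)) * monEval k t ξ)
      = t ^ k.1 * Real.sqrt t ^ (∑ i, k.2 i) * stdM k.2 := by
  set s := Real.sqrt t with hs_def
  have hs : 0 < s := Real.sqrt_pos.mpr ht
  have hs2 : s * s = t := Real.mul_self_sqrt ht.le
  set C : ℝ := (s ^ n)⁻¹ * ((2 * Real.pi) ^ (-(n : ℝ) / 2) * (t ^ k.1 * s ^ (∑ i, k.2 i)))
    with hC_def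
  set F : (Fin n → ℝ) → ℝ := fun ξ =>
    (2 * Real.pi * t) ^ (-(n : ℝ) / 2) * Real.exp (-(∑ i, ξ i ^ 2) / (2 * t)) * monEval k t ξ
    with hF_def
  have hconst : (2 * Real.pi * t) ^ (-(n : ℝ) / 2)
      = (s ^ n)⁻¹ * (2 * Real.pi) ^ (-(n : ℝ) / 2) := by
    rw [Real.mul_rpow (by positivity) ht.le]
    have h1 : s ^ n = t ^ ((n : ℝ) / 2) := by
      rw [hs_def, Real.sqrt_eq_rpow, ← Real.rpow_natCast (t ^ ((1:ℝ)/2)) n,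
        ← Real.rpow_mul ht.le]
      congr 1
      ring
    rw [h1, ← Real.rpow_neg ht.le, mul_comm]
    congr 1
    ring
  have key : ∀ x : Fin n → ℝ, F (s • x)
      = C * (Real.exp (-(∑ i, x i ^ 2) / 2) * ∏ i, x i ^ k.2 i) := by
    intro x
    have hsum : (∑ i, (s • x) i ^ 2) = t * ∑ i, x i ^ 2 := by
      simp only [Pi.smul_apply, smul_eq_mul, mul_pow]
      rw [← Finset.mul_sum]
      congr 1
      rw [sq, hs2]
    have hexp : Real.exp (-(∑ i, (s • x) i ^ 2) / (2 * t))
        = Real.exp (-(∑ i, x i ^ 2) / 2) := by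
      rw [hsum]
      congr 1
      field_simp
    have hmon : monEval k t (s • x) = t ^ k.1 * (s ^ (∑ i, k.2 i) * ∏ i, x i ^ k.2 i) := by
      unfold monEval
      simp only [Pi.smul_apply, smul_eq_mul, mul_pow]
      rw [Finset.prod_mul_distrib, Finset.prod_pow_eq_pow_sum]
    rw [hF_def]
    simp only
    rw [hexp, hmon, hconst, hC_def]
    ring
  have hint_comp : Integrable (fun x : Fin n → ℝ => F (s • x)) := by
    simp_rw [key]
    exact (intStd k.2).const_mul C
  have hint : Integrable F := (integrable_comp_smul_iff volume F hs.ne').mp hint_comp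
  refine ⟨hint, ?_⟩
  have hsub := MeasureTheory.Measure.integral_comp_smul (μ := volume) F s
  rw [Module.finrank_fin_fun, abs_of_nonneg (inv_nonneg.mpr (by positivity)), smul_eq_mul] at hsub
  have h1 : ∫ x : Fin n → ℝ, F (s • x)
      = (s ^ n)⁻¹ * (t ^ k.1 * s ^ (∑ i, k.2 i) * stdM k.2) := by
    simp_rw [key]
    rw [integral_const_mul, stdM_eq, hC_def]
    ring
  have h2 := hsub.symm.trans h1
  exact mul_left_cancel₀ (inv_ne_zero (by positivity)) h2

/-- The value of the Gaussian functional on the monomial `p_k`. -/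
noncomputable def tv {n : ℕ} (k : MIdx n) (t : ℝ) : ℝ :=
  t ^ k.1 * Real.sqrt t ^ (∑ i, k.2 i) * stdM k.2

noncomputable def GP {n : ℕ} (c : MIdx n →₀ ℝ) (t : ℝ) : ℝ :=
  ∑ k ∈ c.support, c k * tv k t
noncomputable def SC {n : ℕ} (c : MIdx n →₀ ℝ) : ℝ :=
  ∑ k ∈ c.support, c k * stdM k.2
noncomputable def GP2 {n : ℕ} (c d : MIdx n →₀ ℝ) (t : ℝ) : ℝ :=
  ∑ k ∈ c.support, ∑ l ∈ d.support, c k * d l * tv (k + l) t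
noncomputable def SC2 {n : ℕ} (c d : MIdx n →₀ ℝ) : ℝ :=
  ∑ k ∈ c.support, ∑ l ∈ d.support, c k * d l * stdM (k + l).2

lemma gauss_poly_s9 {n : ℕ} (c : MIdx n →₀ ℝ) {t : ℝ} (ht : 0 < t) :
    gaussInt (polyEval c) t = GP c t := by
  unfold gaussInt polyEval GP tv
  have hpt : ∀ ξ : Fin n → ℝ,
      (2 * Real.pi * t) ^ (-(n : ℝ) / 2) * Real.exp (-(∑ i, ξ i ^ 2) / (2 * t))
        * (∑ k ∈ c.support, c k * monEval k t ξ)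
      = ∑ k ∈ c.support, c k *
          ((2 * Real.pi * t) ^ (-(n : ℝ) / 2) * Real.exp (-(∑ i, ξ i ^ 2) / (2 * t))
            * monEval k t ξ) := by
    intro ξ
    rw [Finset.mul_sum]
    exact Finset.sum_congr rfl fun k _ => by ring
  simp_rw [hpt]
  rw [integral_finset_sum _ (fun k _ => ((gauss_mon_s9 k ht).1.const_mul (c k)))]
  exact Finset.sum_congr rfl fun k _ => by rw [integral_const_mul, (gauss_mon_s9 k ht).2]

lemma monEval_add {n : ℕ} (k l : MIdx n) {t : ℝ} (ht : t ≠ 0) (ξ : Fin n → ℝ) :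
    monEval (k + l) t ξ = monEval k t ξ * monEval l t ξ := by
  unfold monEval
  have h1 : (k + l).1 = k.1 + l.1 := rfl
  have h2 : ∀ i, (k + l).2 i = k.2 i + l.2 i := fun i => rfl
  simp_rw [h1, h2, zpow_add₀ ht, pow_add, Finset.prod_mul_distrib]
  ring

lemma gauss_poly2 {n : ℕ} (c d : MIdx n →₀ ℝ) {t : ℝ} (ht : 0 < t) :
    gaussInt (fun t ξ => polyEval c t ξ * polyEval d t ξ) t = GP2 c d t := by
  unfold gaussInt polyEval GP2 tv
  have hpt : ∀ ξ : Fin n → ℝ,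
      (2 * Real.pi * t) ^ (-(n : ℝ) / 2) * Real.exp (-(∑ i, ξ i ^ 2) / (2 * t))
        * ((∑ k ∈ c.support, c k * monEval k t ξ) * (∑ l ∈ d.support, d l * monEval l t ξ))
      = ∑ p ∈ c.support ×ˢ d.support, c p.1 * d p.2 *
          ((2 * Real.pi * t) ^ (-(n : ℝ) / 2) * Real.exp (-(∑ i, ξ i ^ 2) / (2 * t))
            * monEval (p.1 + p.2) t ξ) := by
    intro ξ
    rw [Finset.sum_mul_sum, Finset.sum_product, Finset.mul_sum]
    refine Finset.sum_congr rfl fun k _ => ?_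
    rw [Finset.mul_sum]
    refine Finset.sum_congr rfl fun l _ => ?_
    rw [monEval_add k l ht.ne' ξ]
    ring
  simp_rw [hpt]
  rw [integral_finset_sum _ (fun p _ => ((gauss_mon_s9 (p.1 + p.2) ht).1.const_mul _))]
  rw [← Finset.sum_product']
  refine Finset.sum_congr rfl fun p _ => ?_
  rw [integral_const_mul, (gauss_mon_s9 (p.1 + p.2) ht).2]

lemma dDeg_add {n : ℕ} (k l : MIdx n) : dDeg (k + l) = dDeg k + dDeg l := by
  unfold dDeg
  have h1 : (k + l).1 = k.1 + l.1 := rfl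
  have h2 : ∀ i, ((k + l).2 i : ℝ) = (k.2 i : ℝ) + (l.2 i : ℝ) := fun i => by
    show ((k.2 i + l.2 i : ℕ) : ℝ) = _
    push_cast
    ring
  simp_rw [h1, h2, Finset.sum_add_distrib]
  push_cast
  ring

lemma odd_exists {n : ℕ} (v : Fin n → ℕ) (ho : Odd (∑ i, v i)) : ∃ j, Odd (v j) := by
  by_contra hall
  push_neg at hall
  simp only [Nat.not_odd_iff_even] at hall
  exact (Nat.not_even_iff_odd.mpr ho) (Finset.even_sum _ fun i _ => hall i)

lemma sum_odd_of_dDeg_half {n : ℕ} (k : MIdx n) (r : ℤ) (h : dDeg k = (r : ℝ) + 1/2) :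
    Odd (∑ i, k.2 i) := by
  have hcast : ((∑ i, k.2 i : ℕ) : ℝ) = ∑ i, (k.2 i : ℝ) := by push_cast; rfl
  have h2 : ((∑ i, k.2 i : ℕ) : ℝ) = 2 * r + 1 - 2 * k.1 := by
    unfold dDeg at h; rw [hcast]; linarith
  have h3 : ((∑ i, k.2 i : ℕ) : ℤ) = 2 * r + 1 - 2 * k.1 := by exact_mod_cast h2
  have h4 : Odd ((∑ i, k.2 i : ℕ) : ℤ) := ⟨r - k.1, by omega⟩
  exact_mod_cast h4

lemma tv_half {n : ℕ} (k : MIdx n) (r : ℤ) (h : dDeg k = (r : ℝ) + 1/2) (t : ℝ) :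
    tv k t = 0 := by
  obtain ⟨j, hj⟩ := odd_exists k.2 (sum_odd_of_dDeg_half k r h)
  unfold tv
  rw [stdM_odd j hj, mul_zero]

lemma tv_int {n : ℕ} (k : MIdx n) (r : ℤ) (h : dDeg k = (r : ℝ)) {t : ℝ} (ht : 0 < t) :
    tv k t = stdM k.2 * t ^ r := by
  unfold tv
  rcases Nat.even_or_odd (∑ i, k.2 i) with ⟨w, hw⟩ | ho
  · have hr : k.1 + (w : ℤ) = r := by
      have hcast : ((∑ i, k.2 i : ℕ) : ℝ) = ∑ i, (k.2 i : ℝ) := by push_cast; rfl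
      have : (k.1 : ℝ) + w = r := by
        unfold dDeg at h
        rw [← hcast, hw] at h
        push_cast at h ⊢
        linarith
      exact_mod_cast this
    rw [hw, pow_add, ← mul_pow, Real.mul_self_sqrt ht.le, ← zpow_natCast t w,
      ← zpow_add₀ ht.ne', hr]
    ring
  · obtain ⟨j, hj⟩ := odd_exists k.2 ho
    rw [stdM_odd j hj]
    ring

lemma GP_sum {n : ℕ} (c : MIdx n →₀ ℝ) (t : ℝ) :
    GP c t = c.sum fun k a => a * tv k t := rfl

lemma GP_add {n : ℕ} (c d : MIdx n →₀ ℝ) (t : ℝ) :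
    GP (c + d) t = GP c t + GP d t := by
  simp only [GP_sum]
  exact Finsupp.sum_add_index' (fun k => by ring) (fun k b₁ b₂ => by ring)

lemma GP_single {n : ℕ} (k : MIdx n) (a : ℝ) (t : ℝ) :
    GP (Finsupp.single k a) t = a * tv k t := by
  rw [GP_sum]
  exact Finsupp.sum_single_index (by ring)

lemma GP2_sum {n : ℕ} (c d : MIdx n →₀ ℝ) (t : ℝ) :
    GP2 c d t = c.sum fun k a => d.sum fun l b => a * b * tv (k + l) t := rfl

lemma GP2_addl {n : ℕ} (c₁ c₂ d : MIdx n →₀ ℝ) (t : ℝ) :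
    GP2 (c₁ + c₂) d t = GP2 c₁ d t + GP2 c₂ d t := by
  simp only [GP2_sum]
  refine Finsupp.sum_add_index' (fun k => by simp) (fun k b₁ b₂ => ?_)
  rw [← Finsupp.sum_add]
  exact Finsupp.sum_congr fun l _ => by ring

lemma GP2_addr {n : ℕ} (c d₁ d₂ : MIdx n →₀ ℝ) (t : ℝ) :
    GP2 c (d₁ + d₂) t = GP2 c d₁ t + GP2 c d₂ t := by
  simp only [GP2_sum]
  rw [← Finsupp.sum_add]
  refine Finsupp.sum_congr fun k _ => ?_
  exact Finsupp.sum_add_index' (fun l => by ring) (fun l b₁ b₂ => by ring)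

lemma GP2_single_right {n : ℕ} (c : MIdx n →₀ ℝ) (b : ℝ) (t : ℝ) :
    GP2 c (Finsupp.single 0 b) t = b * GP c t := by
  simp only [GP2_sum, GP_sum]
  rw [Finsupp.mul_sum]
  refine Finsupp.sum_congr fun k _ => ?_
  rw [Finsupp.sum_single_index (by ring), add_zero]
  ring

lemma GP2_single_left {n : ℕ} (d : MIdx n →₀ ℝ) (a : ℝ) (t : ℝ) :
    GP2 (Finsupp.single 0 a) d t = a * GP d t := by
  simp only [GP2_sum, GP_sum]
  rw [Finsupp.sum_single_index (by simp), Finsupp.mul_sum]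
  refine Finsupp.sum_congr fun l _ => ?_
  rw [zero_add]
  ring

lemma GP_homog {n : ℕ} (c : MIdx n →₀ ℝ) (r : ℤ) (hc : ∀ k ∈ c.support, dDeg k = (r : ℝ))
    {t : ℝ} (ht : 0 < t) : GP c t = SC c * t ^ r := by
  unfold GP SC
  rw [Finset.sum_mul]
  refine Finset.sum_congr rfl fun k hk => ?_
  rw [tv_int k r (hc k hk) ht]
  ring

lemma GP_half {n : ℕ} (c : MIdx n →₀ ℝ) (r : ℤ)
    (hc : ∀ k ∈ c.support, dDeg k = (r : ℝ) + 1/2) (t : ℝ) : GP c t = 0 := by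
  unfold GP
  refine Finset.sum_eq_zero fun k hk => ?_
  rw [tv_half k r (hc k hk) t, mul_zero]

lemma GP2_homog {n : ℕ} (c d : MIdx n →₀ ℝ) {p q : ℝ} (r : ℤ) (hr : p + q = (r : ℝ))
    (hc : ∀ k ∈ c.support, dDeg k = p) (hd : ∀ l ∈ d.support, dDeg l = q)
    {t : ℝ} (ht : 0 < t) : GP2 c d t = SC2 c d * t ^ r := by
  unfold GP2 SC2
  rw [Finset.sum_mul]
  refine Finset.sum_congr rfl fun k hk => ?_
  rw [Finset.sum_mul]
  refine Finset.sum_congr rfl fun l hl => ?_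
  rw [tv_int (k + l) r (by rw [dDeg_add, hc k hk, hd l hl, hr]) ht]
  ring

lemma GP2_half {n : ℕ} (c d : MIdx n →₀ ℝ) {p q : ℝ} (r : ℤ) (hr : p + q = (r : ℝ) + 1/2)
    (hc : ∀ k ∈ c.support, dDeg k = p) (hd : ∀ l ∈ d.support, dDeg l = q)
    (t : ℝ) : GP2 c d t = 0 := by
  unfold GP2
  refine Finset.sum_eq_zero fun k hk => Finset.sum_eq_zero fun l hl => ?_
  rw [tv_half (k + l) r (by rw [dDeg_add, hc k hk, hd l hl, hr]) t, mul_zero]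

lemma tv_zero {n : ℕ} (t : ℝ) : tv (0 : MIdx n) t = 1 := by
  unfold tv
  have h1 : (0 : MIdx n).1 = 0 := rfl
  have h2 : (0 : MIdx n).2 = (0 : Fin n → ℕ) := rfl
  rw [h1, h2, stdM_zero]
  simp

lemma mem_homog {n : ℕ} {c : MIdx n →₀ ℝ} {s : ℝ} {k : MIdx n}
    (hk : k ∈ (homogComp c s).support) : dDeg k = s := by
  classical
  have := Finsupp.support_filter (p := fun k => dDeg k = s) (f := c)
  rw [homogComp] at hk
  rw [this] at hk
  exact (Finset.mem_filter.mp hk).2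


/-- **Quotients of Gaussian integrals.**  If `f = f₀ + f_{1/2} + f₁` with `f₀` a real
constant and `h = 1 + h₁` with `h₁` homogeneous of degree `1`, then the limits
`𝒢₀(fh) = lim_{t→0} 𝒢_t(fh)` and `𝒢₀(h) = lim_{t→0} 𝒢_t(h)` exist and, as `t ↓ 0`,
`𝒢_t(fh)/𝒢_t(h) − 𝒢₀(fh)/𝒢₀(h) = 𝒢_t(f₁) + o(t)`. -/
theorem gaussInt_quotient_asymptotics {n : ℕ} (f h : MIdx n →₀ ℝ)
    (hf : f = homogComp f 0 + homogComp f (1 / 2) + homogComp f 1)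
    (hf0 : ∀ k ∈ (homogComp f 0).support, k = ((0 : ℤ), (0 : Fin n → ℕ)))
    (hh : h = Finsupp.single ((0 : ℤ), (0 : Fin n → ℕ)) 1 + homogComp h 1) :
    ∃ Lfh Lh : ℝ,
      Tendsto (gaussInt (fun t ξ => polyEval f t ξ * polyEval h t ξ)) (𝓝[>] (0 : ℝ))
        (𝓝 Lfh) ∧
      Tendsto (gaussInt (polyEval h)) (𝓝[>] (0 : ℝ)) (𝓝 Lh) ∧
      (fun t => gaussInt (fun t ξ => polyEval f t ξ * polyEval h t ξ) t
            / gaussInt (polyEval h) t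
          - Lfh / Lh - gaussInt (polyEval (homogComp f 1)) t)
        =o[𝓝[>] (0 : ℝ)] (fun t => t) := by
  classical
  have hz : ((0 : ℤ), (0 : Fin n → ℕ)) = (0 : MIdx n) := rfl
  set F0 := homogComp f 0 with hF0
  set Fh := homogComp f (1/2) with hFh
  set F1 := homogComp f 1 with hF1
  set H1 := homogComp h 1 with hH1
  -- F0 is a single
  have hF0s : F0 = Finsupp.single (0 : MIdx n) (F0 0) := by
    refine Finsupp.support_subset_singleton.mp ?_
    intro k hk
    rw [Finset.mem_singleton]
    rw [← hz]
    exact hf0 k hk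
  set P0 : ℝ := F0 0 with hP0
  set A : ℝ := SC F1 with hA
  set B : ℝ := SC H1 with hB
  set R : ℝ := SC2 F1 H1 with hR
  -- degree facts
  have hdF1 : ∀ k ∈ F1.support, dDeg k = ((1 : ℤ) : ℝ) := fun k hk => by
    simpa using mem_homog hk
  have hdH1 : ∀ k ∈ H1.support, dDeg k = ((1 : ℤ) : ℝ) := fun k hk => by
    simpa using mem_homog hk
  have hdFh : ∀ k ∈ Fh.support, dDeg k = ((0 : ℤ) : ℝ) + 1/2 := fun k hk => by
    simpa using mem_homog hk
  have hdF0 : ∀ k ∈ F0.support, dDeg k = ((0 : ℤ) : ℝ) := by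
    intro k hk
    rw [hf0 k hk, hz]
    simp [dDeg]
  -- formulas
  have hGh : ∀ t : ℝ, 0 < t → gaussInt (polyEval h) t = 1 + B * t := by
    intro t ht
    rw [gauss_poly_s9 h ht]
    conv_lhs => rw [hh]
    rw [hz, GP_add, GP_single, tv_zero, GP_homog H1 1 hdH1 ht, ← hB, zpow_one]
    ring
  have hGf1 : ∀ t : ℝ, 0 < t → gaussInt (polyEval F1) t = A * t := by
    intro t ht
    rw [gauss_poly_s9 F1 ht, GP_homog F1 1 hdF1 ht, ← hA, zpow_one]
  have hGfh : ∀ t : ℝ, 0 < t →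
      gaussInt (fun t ξ => polyEval f t ξ * polyEval h t ξ) t
        = P0 + (A + P0 * B) * t + R * t ^ 2 := by
    intro t ht
    rw [gauss_poly2 f h ht]
    conv_lhs => rw [hh, hf]
    rw [hz, GP2_addr, GP2_single_right, GP2_addl, GP2_addl]
    rw [hF0s, GP2_single_left, GP_add, GP_add, GP_single, tv_zero]
    rw [GP_half Fh 0 hdFh t, GP_homog F1 1 hdF1 ht, GP_homog H1 1 hdH1 ht]
    rw [GP2_half Fh H1 1 (by norm_num) hdFh hdH1 t]
    rw [GP2_homog F1 H1 (p := ((1:ℤ):ℝ)) (q := ((1:ℤ):ℝ)) 2 (by push_cast; norm_num)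
      hdF1 hdH1 ht]
    rw [← hA, ← hB, ← hR]
    have h2 : (t : ℝ) ^ (2:ℤ) = t ^ 2 := by rw [show (2:ℤ) = ((2:ℕ):ℤ) from rfl, zpow_natCast]
    simp only [zpow_one, h2]
    ring
  -- limits
  refine ⟨P0, 1, ?_, ?_, ?_⟩
  · have hT : Tendsto (fun t : ℝ => P0 + (A + P0 * B) * t + R * t ^ 2) (𝓝[>] 0) (𝓝 P0) := by
      apply Tendsto.mono_left _ nhdsWithin_le_nhds
      have hc : Continuous fun t : ℝ => P0 + (A + P0 * B) * t + R * t ^ 2 := by fun_prop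
      have := hc.tendsto 0
      simpa using this
    exact hT.congr' (eventually_mem_nhdsWithin.mono fun t ht => (hGfh t ht).symm)
  · have hT : Tendsto (fun t : ℝ => 1 + B * t) (𝓝[>] 0) (𝓝 1) := by
      apply Tendsto.mono_left _ nhdsWithin_le_nhds
      have hc : Continuous fun t : ℝ => 1 + B * t := by fun_prop
      have := hc.tendsto 0
      simpa using this
    exact hT.congr' (eventually_mem_nhdsWithin.mono fun t ht => (hGh t ht).symm)
  · -- little-o
    have hBpos : ∀ᶠ t in 𝓝[>] (0:ℝ), 0 < 1 + B * t := by
      have hT : Tendsto (fun t : ℝ => 1 + B * t) (𝓝[>] 0) (𝓝 1) := by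
        apply Tendsto.mono_left _ nhdsWithin_le_nhds
        have hc : Continuous fun t : ℝ => 1 + B * t := by fun_prop
        simpa using hc.tendsto 0
      exact hT.eventually (eventually_gt_nhds one_pos)
    have hEq : ∀ᶠ t in 𝓝[>] (0:ℝ),
        gaussInt (fun t ξ => polyEval f t ξ * polyEval h t ξ) t
            / gaussInt (polyEval h) t - P0 / 1 - gaussInt (polyEval F1) t
          = (R - A * B) * t ^ 2 / (1 + B * t) := by
      filter_upwards [eventually_mem_nhdsWithin, hBpos] with t ht hb
      rw [hGfh t ht, hGh t ht, hGf1 t ht]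
      field_simp
      ring
    have key : (fun t : ℝ => (R - A * B) * t ^ 2 / (1 + B * t)) =o[𝓝[>] (0:ℝ)]
        (fun t : ℝ => t) := by
      rw [Asymptotics.isLittleO_iff_tendsto'
        (eventually_mem_nhdsWithin.mono fun t (ht : t ∈ Set.Ioi (0:ℝ)) h0 =>
          absurd h0 (ne_of_gt ht))]
      have hT : Tendsto (fun t : ℝ => (R - A * B) * t / (1 + B * t)) (𝓝[>] 0) (𝓝 0) := by
        apply Tendsto.mono_left _ nhdsWithin_le_nhds
        have hc : ContinuousAt (fun t : ℝ => (R - A * B) * t / (1 + B * t)) 0 := by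
          apply ContinuousAt.div
          · fun_prop
          · fun_prop
          · norm_num
        have := hc.tendsto
        simpa using this
      refine hT.congr' ?_
      filter_upwards [eventually_mem_nhdsWithin] with t (ht : t ∈ Set.Ioi (0:ℝ))
      have htne : (t : ℝ) ≠ 0 := ne_of_gt ht
      have heq : (R - A * B) * t ^ 2 / (1 + B * t) / t = (R - A * B) * t / (1 + B * t) := by
        rw [div_div, show (R - A * B) * t ^ 2 = ((R - A * B) * t) * t by ring,
          mul_div_mul_right _ _ htne]
      exact heq.symm
    exact key.congr' (Filter.EventuallyEq.symm hEq) Filter.EventuallyEq.rfl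
end
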